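/- arXiv:2204.11583 — 7 statements merged into one kernel-verified Lean document; each statement's English description precedes it below -/
import Mathlib

section
/- Let 1 < p < ∞, β < p−1, and u ∈ W^{1,p}(ℝ₊,t^β). If there exists a sequence t_n → 0⁺ with u(t_n) → 0, then lim_{t→0⁺} u(t) = 0 and lim_{t→0⁺} t^{(β−(p−1))/p} u(t) = 0. -/
open MeasureTheory Set Filter Topology

/-- The norm of `W^{1,p}(ℝ₊, t^β)` applied to a function `u` with weak derivative `u'`. -/
noncomputable def wNorm (p β : ℝ) (u u' : ℝ → ℝ) : ℝ :=
  (∫ t in Ioi (0:ℝ), |u t| ^ p * t ^ β) ^ (1/p) +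
  (∫ t in Ioi (0:ℝ), |u' t| ^ p * t ^ β) ^ (1/p)

/-- `u` belongs to the weighted Sobolev space `W^{1,p}(ℝ₊, t^β)`, with weak derivative `u'`:
`u` is continuous on `(0,∞)`, locally absolutely continuous with derivative `u'`, and both
`∫_0^∞ |u|^p t^β dt` and `∫_0^∞ |u'|^p t^β dt` are finite. -/
def MemW (p β : ℝ) (u u' : ℝ → ℝ) : Prop :=
  ContinuousOn u (Ioi 0) ∧
  (∀ a b : ℝ, 0 < a → a < b → IntegrableOn u' (Ioc a b)) ∧
  (∀ a b : ℝ, 0 < a → a < b → u b - u a = ∫ t in a..b, u' t) ∧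
  IntegrableOn (fun t => |u t| ^ p * t ^ β) (Ioi 0) ∧
  IntegrableOn (fun t => |u' t| ^ p * t ^ β) (Ioi 0)

/-- `u ∈ W_0^{1,p}(ℝ₊, t^β)`: `u ∈ W^{1,p}(ℝ₊,t^β)` and `u` can be approximated arbitrarily
well, in the `W^{1,p}(ℝ₊,t^β)` norm, by smooth functions compactly supported in `(0,∞)`. -/
def MemW0 (p β : ℝ) (u u' : ℝ → ℝ) : Prop :=
  MemW p β u u' ∧
  ∀ ε > 0, ∃ φ : ℝ → ℝ, ContDiff ℝ (⊤ : ℕ∞) φ ∧ HasCompactSupport φ ∧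
    tsupport φ ⊆ Ioi 0 ∧
    wNorm p β (fun t => u t - φ t) (fun t => u' t - deriv φ t) < ε

/-- The norm of the space `Y^{1,p}_{t^β}`. -/
noncomputable def yNorm (p β : ℝ) (u u' : ℝ → ℝ) : ℝ :=
  (∫ t in Ioi (0:ℝ), |u t| ^ p * t ^ β * (1 + t ^ (-p))) ^ (1/p) +
  (∫ t in Ioi (0:ℝ), |u' t| ^ p * t ^ β) ^ (1/p)

/-- `u ∈ Y^{1,p}_{t^β}`: `u ∈ W^{1,p}(ℝ₊,t^β)` and additionally `∫_0^∞ |u|^p t^{β-p} dt < ∞`. -/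
def MemY (p β : ℝ) (u u' : ℝ → ℝ) : Prop :=
  MemW p β u u' ∧ IntegrableOn (fun t => |u t| ^ p * t ^ (β - p)) (Ioi 0)

private lemma memLp_of_int {μ : Measure ℝ} {f : ℝ → ℝ} {p : ℝ} (hp : 0 < p)
    (hm : AEStronglyMeasurable f μ) (hi : Integrable (fun x => |f x| ^ p) μ) :
    MemLp f (ENNReal.ofReal p) μ := by
  have h0 : ENNReal.ofReal p ≠ 0 := by
    simp only [ne_eq, ENNReal.ofReal_eq_zero]
    exact not_le.mpr hp
  have ht : ENNReal.ofReal p ≠ ⊤ := ENNReal.ofReal_ne_top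
  rw [← memLp_norm_rpow_iff hm h0 ht, ENNReal.div_self h0 ht, memLp_one_iff_integrable]
  simpa [Real.norm_eq_abs, ENNReal.toReal_ofReal hp.le] using hi

private lemma holder_bound {p β : ℝ} (hp : 1 < p) (hβ : β < p - 1)
    {u' : ℝ → ℝ} (hu'_int : IntegrableOn (fun t => |u' t| ^ p * t ^ β) (Ioi 0))
    {s t : ℝ} (hs : 0 < s) (hst : s < t) (hi : IntegrableOn u' (Ioc s t)) :
    ∫ τ in Ioc s t, |u' τ| ≤
      (∫ τ in Ioc 0 t, |u' τ| ^ p * τ ^ β) ^ (1/p) *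
      (∫ τ in Ioc 0 t, τ ^ (-(β/p) * (p/(p-1)))) ^ (1/(p/(p-1))) := by
  have hp0 : (0:ℝ) < p := lt_trans one_pos hp
  set q : ℝ := p / (p - 1) with hq_def
  have hpq : p.HolderConjugate q := Real.HolderConjugate.conjExponent hp
  have hq0 : (0:ℝ) < q := hpq.symm.pos
  set r : ℝ := -(β/p) * q with hr_def
  have hr : -1 < r := by
    have hp1 : (0:ℝ) < p - 1 := by linarith
    rw [hr_def, hq_def]
    rw [show -(β/p) * (p/(p-1)) = -β / (p-1) by field_simp]
    rw [neg_div, lt_neg, neg_neg]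
    rw [div_lt_one hp1]; linarith
  have hrw : True := trivial
  set f : ℝ → ℝ := fun τ => |u' τ| * τ ^ (β/p) with hf_def
  set g : ℝ → ℝ := fun τ => τ ^ (-(β/p)) with hg_def
  set μst := volume.restrict (Ioc s t) with hμ_def
  have hpos : ∀ τ ∈ Ioc s t, (0:ℝ) < τ := fun τ hτ => hs.trans hτ.1
  have hfm : AEStronglyMeasurable f μst := by
    have h1 : AEStronglyMeasurable (fun τ => |u' τ|) μst := by
      have := hi.aestronglyMeasurable.norm
      simpa [Real.norm_eq_abs] using this
    have h2 : AEStronglyMeasurable (fun τ : ℝ => τ ^ (β/p)) μst := by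
      refine ContinuousOn.aestronglyMeasurable (fun x hx => ?_) measurableSet_Ioc
      exact (Real.continuousAt_rpow_const x _ (Or.inl (ne_of_gt (hpos x hx)))).continuousWithinAt
    exact h1.mul h2
  have hgm : AEStronglyMeasurable g μst := by
    refine ContinuousOn.aestronglyMeasurable (fun x hx => ?_) measurableSet_Ioc
    exact (Real.continuousAt_rpow_const x _ (Or.inl (ne_of_gt (hpos x hx)))).continuousWithinAt
  have hf_nonneg : 0 ≤ᵐ[μst] f := (ae_restrict_iff' measurableSet_Ioc).2 (ae_of_all _
    (fun τ hτ => mul_nonneg (abs_nonneg _) (Real.rpow_nonneg (hpos τ hτ).le _)))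
  have hg_nonneg : 0 ≤ᵐ[μst] g := (ae_restrict_iff' measurableSet_Ioc).2 (ae_of_all _
    (fun τ hτ => Real.rpow_nonneg (hpos τ hτ).le _))
  have hfp_eq : ∀ τ ∈ Ioc s t, f τ ^ p = |u' τ| ^ p * τ ^ β := by
    intro τ hτ
    have hτ0 := hpos τ hτ
    rw [hf_def]
    rw [Real.mul_rpow (abs_nonneg _) (Real.rpow_nonneg hτ0.le _), ← Real.rpow_mul hτ0.le,
      div_mul_cancel₀ β (ne_of_gt hp0)]
  have hgq_eq : ∀ τ ∈ Ioc s t, g τ ^ q = τ ^ r := by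
    intro τ hτ
    rw [hg_def, hr_def, ← Real.rpow_mul (hpos τ hτ).le]
  have hfp_int : Integrable (fun τ => |f τ| ^ p) μst := by
    have base : IntegrableOn (fun τ => |u' τ| ^ p * τ ^ β) (Ioc s t) :=
      hu'_int.mono_set (fun x hx => hpos x hx)
    refine base.congr ?_
    refine (ae_restrict_iff' measurableSet_Ioc).2 (ae_of_all _ (fun τ hτ => ?_))
    show |u' τ| ^ p * τ ^ β = |f τ| ^ p
    rw [abs_of_nonneg (mul_nonneg (abs_nonneg _) (Real.rpow_nonneg (hpos τ hτ).le _)),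
      hfp_eq τ hτ]
  have hgq_int : Integrable (fun τ => |g τ| ^ q) μst := by
    have base : IntegrableOn (fun τ : ℝ => τ ^ r) (Ioc s t) :=
      (intervalIntegrable_iff_integrableOn_Ioc_of_le hst.le).1
        (intervalIntegral.intervalIntegrable_rpow' hr)
    refine base.congr ?_
    refine (ae_restrict_iff' measurableSet_Ioc).2 (ae_of_all _ (fun τ hτ => ?_))
    show τ ^ r = |g τ| ^ q
    rw [abs_of_nonneg (Real.rpow_nonneg (hpos τ hτ).le _), hgq_eq τ hτ]
  have hMf := memLp_of_int hp0 hfm hfp_int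
  have hMg := memLp_of_int hq0 hgm hgq_int
  have hH := MeasureTheory.integral_mul_le_Lp_mul_Lq_of_nonneg hpq hf_nonneg hg_nonneg hMf hMg
  have heq : ∫ τ in Ioc s t, |u' τ| = ∫ τ, f τ * g τ ∂μst := by
    refine setIntegral_congr_fun measurableSet_Ioc (fun τ hτ => ?_)
    have hτ0 := hpos τ hτ
    rw [hf_def, hg_def]
    show |u' τ| = |u' τ| * τ ^ (β/p) * τ ^ (-(β/p))
    rw [mul_assoc, ← Real.rpow_add hτ0, add_neg_cancel, Real.rpow_zero, mul_one]
  -- bound the two factors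
  have hA : (∫ τ, f τ ^ p ∂μst) ≤ ∫ τ in Ioc 0 t, |u' τ| ^ p * τ ^ β := by
    rw [hμ_def, show (∫ τ in Ioc s t, f τ ^ p) = ∫ τ in Ioc s t, |u' τ| ^ p * τ ^ β from
      setIntegral_congr_fun measurableSet_Ioc hfp_eq]
    refine setIntegral_mono_set (hu'_int.mono_set Ioc_subset_Ioi_self) ?_
      (HasSubset.Subset.eventuallyLE (Ioc_subset_Ioc_left hs.le))
    refine (ae_restrict_iff' measurableSet_Ioc).2 (ae_of_all _ (fun τ hτ => ?_))
    exact mul_nonneg (Real.rpow_nonneg (abs_nonneg _) _) (Real.rpow_nonneg hτ.1.le _)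
  have hB : (∫ τ, g τ ^ q ∂μst) ≤ ∫ τ in Ioc 0 t, τ ^ r := by
    rw [hμ_def, show (∫ τ in Ioc s t, g τ ^ q) = ∫ τ in Ioc s t, τ ^ r from
      setIntegral_congr_fun measurableSet_Ioc hgq_eq]
    refine setIntegral_mono_set
      ((intervalIntegrable_iff_integrableOn_Ioc_of_le (hs.trans hst).le).1
        (intervalIntegral.intervalIntegrable_rpow' hr)) ?_
      (HasSubset.Subset.eventuallyLE (Ioc_subset_Ioc_left hs.le))
    refine (ae_restrict_iff' measurableSet_Ioc).2 (ae_of_all _ (fun τ hτ => ?_))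
    exact Real.rpow_nonneg hτ.1.le _
  have hAnn : 0 ≤ ∫ τ, f τ ^ p ∂μst :=
    integral_nonneg_of_ae (hf_nonneg.mono (fun τ hτ => Real.rpow_nonneg hτ _))
  have hBnn : 0 ≤ ∫ τ, g τ ^ q ∂μst :=
    integral_nonneg_of_ae (hg_nonneg.mono (fun τ hτ => Real.rpow_nonneg hτ _))
  calc ∫ τ in Ioc s t, |u' τ| = ∫ τ, f τ * g τ ∂μst := heq
    _ ≤ (∫ τ, f τ ^ p ∂μst) ^ (1/p) * (∫ τ, g τ ^ q ∂μst) ^ (1/q) := hH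
    _ ≤ (∫ τ in Ioc 0 t, |u' τ| ^ p * τ ^ β) ^ (1/p) * (∫ τ in Ioc 0 t, τ ^ r) ^ (1/q) := by
        refine mul_le_mul (Real.rpow_le_rpow hAnn hA (by positivity))
          (Real.rpow_le_rpow hBnn hB (by positivity))
          (Real.rpow_nonneg hBnn _) (Real.rpow_nonneg (hAnn.trans hA) _)

/-- for `β < p-1` and `u ∈ W^{1,p}(ℝ₊,t^β)`, vanishing along some sequence
`t_n → 0⁺` forces `u(t) → 0` and `t^{(β-(p-1))/p} u(t) → 0` as `t → 0⁺`. -/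
theorem stmt4 (p β : ℝ) (hp : 1 < p) (hβ : β < p - 1)
    (u u' : ℝ → ℝ) (hu : MemW p β u u')
    (ts : ℕ → ℝ) (hts : ∀ n, 0 < ts n)
    (hts0 : Tendsto ts atTop (𝓝 0))
    (hu0 : Tendsto (fun n => u (ts n)) atTop (𝓝 0)) :
    Tendsto u (𝓝[>] (0:ℝ)) (𝓝 0) ∧
    Tendsto (fun t => t ^ ((β - (p - 1)) / p) * u t) (𝓝[>] (0:ℝ)) (𝓝 0) := by
  obtain ⟨hcont, hint, hFTC, hu_int, hu'_int⟩ := hu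
  have hp0 : (0:ℝ) < p := lt_trans one_pos hp
  have hp1 : (0:ℝ) < p - 1 := by linarith
  set q : ℝ := p / (p - 1) with hq_def
  have hq0 : (0:ℝ) < q := by positivity
  set r : ℝ := -(β/p) * q with hr_def
  have hreq : r = -β / (p-1) := by rw [hr_def, hq_def]; field_simp
  have hr1 : 0 < r + 1 := by
    rw [hreq, show -β/(p-1) + 1 = (p-1-β)/(p-1) by field_simp; ring]
    exact div_pos (by linarith) hp1
  set α : ℝ := (p - 1 - β) / p with hα_def
  have hα : 0 < α := div_pos (by linarith) hp0
  have hαr : (r + 1) * (1/q) = α := by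
    rw [hr_def, hq_def, hα_def]; field_simp; ring
  set C : ℝ := (1/(r+1)) ^ (1/q) with hC_def
  have hC : 0 ≤ C := Real.rpow_nonneg (by positivity) _
  set F : ℝ → ℝ := fun t => ∫ τ in Ioc 0 t, |u' τ| ^ p * τ ^ β with hF_def
  have hFnn : ∀ t, 0 ≤ F t := fun t =>
    setIntegral_nonneg measurableSet_Ioc (fun τ hτ =>
      mul_nonneg (Real.rpow_nonneg (abs_nonneg _) _) (Real.rpow_nonneg hτ.1.le _))
  -- the integral of τ ^ r over Ioc 0 t, bounded
  have hIr : ∀ t : ℝ, 0 < t → (∫ τ in Ioc 0 t, τ ^ r) ^ (1/q) = C * t ^ α := by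
    intro t ht
    have h1 : ∫ τ in Ioc 0 t, τ ^ r = t ^ (r+1) / (r+1) := by
      rw [← intervalIntegral.integral_of_le ht.le, integral_rpow (Or.inl (by linarith)),
        Real.zero_rpow (ne_of_gt hr1), sub_zero]
    rw [h1, div_eq_mul_one_div,
      Real.mul_rpow (Real.rpow_nonneg ht.le _) (by positivity),
      ← Real.rpow_mul ht.le, hαr, hC_def, mul_comm]
  -- main pointwise estimate between two points
  have hold : ∀ s t : ℝ, 0 < s → s < t → |u t - u s| ≤ F t ^ (1/p) * (C * t ^ α) := by
    intro s t hs hst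
    have ht : 0 < t := hs.trans hst
    have h1 : u t - u s = ∫ τ in s..t, u' τ := hFTC s t hs hst
    have h2 : |u t - u s| ≤ ∫ τ in Ioc s t, |u' τ| := by
      rw [h1, ← intervalIntegral.integral_of_le hst.le]
      exact intervalIntegral.abs_integral_le_integral_abs hst.le
    have h3 := holder_bound hp hβ hu'_int hs hst (hint s t hs hst)
    rw [← hq_def, ← hr_def] at h3
    rw [hIr t ht] at h3
    exact h2.trans h3
  -- F tends to 0 at 0⁺
  have hF0 : Tendsto F (𝓝[>] (0:ℝ)) (𝓝 0) := by
    set g0 : ℝ → ℝ := fun τ => |u' τ| ^ p * τ ^ β with hg0_def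
    have hFeq : ∀ t : ℝ, F t = ∫ τ, (Ioc 0 t).indicator g0 τ ∂(volume.restrict (Ioi 0)) := by
      intro t
      rw [integral_indicator measurableSet_Ioc, Measure.restrict_restrict measurableSet_Ioc,
        inter_eq_left.2 Ioc_subset_Ioi_self]
    have hDCT : Tendsto (fun t => ∫ τ, (Ioc 0 t).indicator g0 τ ∂(volume.restrict (Ioi 0)))
        (𝓝[>] (0:ℝ)) (𝓝 (∫ (_ : ℝ), (0:ℝ) ∂(volume.restrict (Ioi 0)))) := by
      refine tendsto_integral_filter_of_dominated_convergence (fun τ => |g0 τ|) ?_ ?_ ?_ ?_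
      · exact Eventually.of_forall (fun t =>
          hu'_int.aestronglyMeasurable.indicator measurableSet_Ioc)
      · refine Eventually.of_forall (fun t => ae_of_all _ (fun τ => ?_))
        simpa [Real.norm_eq_abs] using norm_indicator_le_norm_self g0 τ
      · exact hu'_int.abs
      · refine (ae_restrict_iff' measurableSet_Ioi).2 (ae_of_all _ (fun τ hτ => ?_))
        have hev : ∀ᶠ t in 𝓝[>] (0:ℝ), (Ioc 0 t).indicator g0 τ = 0 := by
          filter_upwards [Ioo_mem_nhdsGT_of_mem (left_mem_Ico.2 hτ)] with t ht
          exact indicator_of_notMem (fun hmem => absurd hmem.2 (not_le.2 ht.2)) _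
        exact Tendsto.congr' (hev.mono fun t h => h.symm) tendsto_const_nhds
    rw [integral_zero] at hDCT
    exact Tendsto.congr (fun t => (hFeq t).symm) hDCT
  -- pointwise bound for |u t|
  have key : ∀ t : ℝ, 0 < t → |u t| ≤ F t ^ (1/p) * (C * t ^ α) := by
    intro t ht
    have hev : ∀ᶠ n in atTop, ts n < t := hts0.eventually_lt_const ht
    have hev2 : ∀ᶠ n in atTop, |u t| ≤ F t ^ (1/p) * (C * t ^ α) + |u (ts n)| := by
      filter_upwards [hev] with n hn
      have h1 := hold (ts n) t (hts n) hn
      calc |u t| = |(u t - u (ts n)) + u (ts n)| := by congr 1; ring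
        _ ≤ |u t - u (ts n)| + |u (ts n)| := abs_add_le _ _
        _ ≤ F t ^ (1/p) * (C * t ^ α) + |u (ts n)| := add_le_add_left h1 _
    have hlim : Tendsto (fun n => F t ^ (1/p) * (C * t ^ α) + |u (ts n)|) atTop
        (𝓝 (F t ^ (1/p) * (C * t ^ α) + 0)) :=
      tendsto_const_nhds.add (by simpa using hu0.abs)
    simpa using ge_of_tendsto hlim hev2
  have hFp0 : Tendsto (fun t => F t ^ (1/p)) (𝓝[>] (0:ℝ)) (𝓝 0) := by
    have hc : ContinuousAt (fun x : ℝ => x ^ (1/p)) 0 :=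
      Real.continuousAt_rpow_const 0 (1/p) (Or.inr (by positivity))
    have h2 := hc.tendsto.comp hF0
    simpa [Function.comp_def, one_div, Real.zero_rpow (show p⁻¹ ≠ (0:ℝ) by positivity)] using h2
  have htα : Tendsto (fun t : ℝ => t ^ α) (𝓝[>] (0:ℝ)) (𝓝 0) := by
    have hc : ContinuousAt (fun x : ℝ => x ^ α) 0 :=
      Real.continuousAt_rpow_const 0 α (Or.inr hα.le)
    have h2 := hc.tendsto.mono_left (nhdsWithin_le_nhds (s := Ioi (0:ℝ)))
    simpa [Real.zero_rpow (ne_of_gt hα)] using h2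
  have hRHS : Tendsto (fun t => F t ^ (1/p) * (C * t ^ α)) (𝓝[>] (0:ℝ)) (𝓝 0) := by
    have h2 := hFp0.mul ((tendsto_const_nhds (x := C)).mul htα)
    simpa using h2
  have hg : Tendsto (fun t => C * F t ^ (1/p)) (𝓝[>] (0:ℝ)) (𝓝 0) := by
    simpa using (tendsto_const_nhds (x := C)).mul hFp0
  constructor
  · apply squeeze_zero_norm' ?_ hRHS
    filter_upwards [self_mem_nhdsWithin] with t ht
    simpa [Real.norm_eq_abs] using key t ht
  · apply squeeze_zero_norm' ?_ hg
    filter_upwards [self_mem_nhdsWithin] with t ht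
    have ht' : (0:ℝ) < t := ht
    have heq : (β - (p - 1)) / p = -α := by rw [hα_def]; ring
    rw [heq, Real.norm_eq_abs, abs_mul, abs_of_nonneg (Real.rpow_nonneg ht'.le _)]
    have hone : t ^ (-α) * t ^ α = 1 := by
      rw [← Real.rpow_add ht', neg_add_cancel, Real.rpow_zero]
    calc t ^ (-α) * |u t| ≤ t ^ (-α) * (F t ^ (1/p) * (C * t ^ α)) :=
          mul_le_mul_of_nonneg_left (key t ht') (Real.rpow_nonneg ht'.le _)
      _ = (t ^ (-α) * t ^ α) * (C * F t ^ (1/p)) := by ring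
      _ = C * F t ^ (1/p) := by rw [hone, one_mul]
end

section
/- Let 1 < p < ∞ and β < p−1. For every u ∈ W^{1,p}(ℝ₊,t^β) there exists L ∈ ℝ such that lim_{t→0⁺} u(t) = L, and moreover lim_{t→0⁺} t^{(β−(p−1))/p} |u(t) − L| = 0. -/
open MeasureTheory Set Filter Topology

/-- for `β < p-1`, every `u ∈ W^{1,p}(ℝ₊,t^β)` has a limit `L` at `0⁺`,
and moreover `t^{(β-(p-1))/p} |u(t) - L| → 0` as `t → 0⁺`. -/
theorem stmt5 (p β : ℝ) (hp : 1 < p) (hβ : β < p - 1)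
    (u u' : ℝ → ℝ) (hu : MemW p β u u') :
    ∃ L : ℝ, Tendsto u (𝓝[>] (0:ℝ)) (𝓝 L) ∧
      Tendsto (fun t => t ^ ((β - (p - 1)) / p) * |u t - L|) (𝓝[>] (0:ℝ)) (𝓝 0) := by
  obtain ⟨hucont, hu'int, hFTC, huint, hg_int⟩ := hu
  have hp0 : (0:ℝ) < p := lt_trans one_pos hp
  have hp1 : p - 1 ≠ 0 := by linarith
  set q : ℝ := p / (p - 1) with hq_def
  have hpq : p.HolderConjugate q := Real.HolderConjugate.conjExponent hp
  have hq0 : (0:ℝ) < q := hpq.symm.pos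
  set e : ℝ := -β / (p - 1) with he_def
  have he1 : (-1:ℝ) < e := by
    rw [he_def]
    rw [neg_lt, ← neg_div, neg_neg]
    rw [div_lt_one (by linarith)]
    linarith
  have he0 : (0:ℝ) < e + 1 := by linarith
  set α : ℝ := (p - 1 - β) / p with hα_def
  have hα : (0:ℝ) < α := div_pos (by linarith) hp0
  have hαq : α * q = e + 1 := by
    rw [hα_def, hq_def, he_def]; field_simp; ring
  clear_value q e α
  -- the function g and its partial integrals F
  set g : ℝ → ℝ := fun τ => |u' τ| ^ p * τ ^ β with hg_def
  set F : ℝ → ℝ := fun t => ∫ τ in Ioc (0:ℝ) t, g τ with hF_def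
  have hg_int' : ∀ t : ℝ, IntegrableOn g (Ioc 0 t) := fun t =>
    hg_int.mono_set Ioc_subset_Ioi_self
  have hg_nonneg : ∀ τ : ℝ, 0 < τ → 0 ≤ g τ :=
    fun τ hτ => mul_nonneg (Real.rpow_nonneg (abs_nonneg _) _) (Real.rpow_nonneg hτ.le _)
  have hF_nonneg : ∀ t : ℝ, 0 ≤ F t := by
    intro t
    exact setIntegral_nonneg measurableSet_Ioc fun τ hτ => hg_nonneg τ hτ.1
  have hF_mono : ∀ s t : ℝ, s ≤ t → F s ≤ F t := by
    intro s t hst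
    exact setIntegral_mono_set (hg_int' t)
      ((ae_restrict_mem measurableSet_Ioc).mono fun τ hτ => hg_nonneg τ hτ.1)
      (HasSubset.Subset.eventuallyLE (Ioc_subset_Ioc_right hst))
  clear_value F
  -- integrability of τ ^ e on Ioc 0 t
  have hrpow_int : ∀ t : ℝ, 0 < t → IntegrableOn (fun τ => τ ^ e) (Ioc 0 t) := by
    intro t ht
    exact (intervalIntegrable_iff_integrableOn_Ioc_of_le ht.le).mp
      (intervalIntegral.intervalIntegrable_rpow' he1)
  have hT : ∀ t : ℝ, 0 < t → ∫ τ in Ioc (0:ℝ) t, τ ^ e = t ^ (e + 1) / (e + 1) := by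
    intro t ht
    rw [← intervalIntegral.integral_of_le ht.le, integral_rpow (Or.inl he1),
      Real.zero_rpow (ne_of_gt he0)]
    ring
  -- measurability of u' near 0
  have hIoc_union : Ioc (0:ℝ) 1 = ⋃ n : ℕ, Ioc ((1:ℝ)/(n+2)) 1 := by
    ext x
    simp only [mem_iUnion, mem_Ioc]
    constructor
    · rintro ⟨hx0, hx1⟩
      obtain ⟨n, hn⟩ := exists_nat_gt (1/x)
      refine ⟨n, ?_, hx1⟩
      rw [div_lt_iff₀ (by positivity)]
      rw [div_lt_iff₀ hx0] at hn
      nlinarith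
    · rintro ⟨n, hn, hx1⟩
      exact ⟨lt_trans (by positivity) hn, hx1⟩
  have hmeas : AEStronglyMeasurable u' (volume.restrict (Ioc (0:ℝ) 1)) := by
    rw [hIoc_union, aestronglyMeasurable_iUnion_iff]
    intro n
    exact (hu'int ((1:ℝ)/(n+2)) 1 (by positivity)
      (by rw [div_lt_one (by positivity)]; have h := Nat.cast_nonneg (α := ℝ) n; linarith)).aestronglyMeasurable
  have hmeas_t : ∀ t : ℝ, t ≤ 1 → AEStronglyMeasurable u' (volume.restrict (Ioc (0:ℝ) t)) :=
    fun t ht => hmeas.mono_measure (Measure.restrict_mono (Ioc_subset_Ioc_right ht) le_rfl)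
  -- pointwise Young inequality
  have young : ∀ l τ : ℝ, 0 < l → 0 < τ →
      |u' τ| ≤ l ^ p / p * g τ + l ^ (-q) / q * τ ^ e := by
    intro l τ hl hτ
    have key := Real.young_inequality_of_nonneg
      (a := l * (|u' τ| * τ ^ (β/p))) (b := l⁻¹ * τ ^ (-(β/p)))
      (by positivity) (by positivity) hpq
    have h1 : l * (|u' τ| * τ ^ (β/p)) * (l⁻¹ * τ ^ (-(β/p))) = |u' τ| := by
      rw [Real.rpow_neg hτ.le]
      field_simp
    have h2 : (l * (|u' τ| * τ ^ (β/p))) ^ p = l ^ p * (|u' τ| ^ p * τ ^ β) := by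
      rw [Real.mul_rpow hl.le (by positivity),
        Real.mul_rpow (abs_nonneg _) (Real.rpow_nonneg hτ.le _), ← Real.rpow_mul hτ.le,
        div_mul_cancel₀ β (ne_of_gt hp0)]
    have h3 : (l⁻¹ * τ ^ (-(β/p))) ^ q = l ^ (-q) * τ ^ e := by
      rw [Real.mul_rpow (by positivity) (by positivity), ← Real.rpow_neg_one l,
        ← Real.rpow_mul hl.le, ← Real.rpow_mul hτ.le]
      congr 2
      · ring
      · rw [he_def, hq_def]; field_simp
    rw [h1, h2, h3] at key
    calc |u' τ| ≤ l ^ p * (|u' τ| ^ p * τ ^ β) / p + l ^ (-q) * τ ^ e / q := key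
      _ = l ^ p / p * g τ + l ^ (-q) / q * τ ^ e := by rw [hg_def]; ring
  -- integral bound from Young
  have bound : ∀ t : ℝ, t ∈ Ioc (0:ℝ) 1 → ∀ l : ℝ, 0 < l →
      ∫ τ in Ioc (0:ℝ) t, |u' τ| ≤ l ^ p / p * F t + l ^ (-q) / q * (t ^ (e+1) / (e+1)) := by
    intro t ht l hl
    have hInt : Integrable (fun τ => l ^ p / p * g τ + l ^ (-q) / q * τ ^ e)
        (volume.restrict (Ioc (0:ℝ) t)) :=
      ((hg_int' t).const_mul _).add ((hrpow_int t ht.1).const_mul _)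
    calc ∫ τ in Ioc (0:ℝ) t, |u' τ|
        ≤ ∫ τ in Ioc (0:ℝ) t, (l ^ p / p * g τ + l ^ (-q) / q * τ ^ e) := by
          refine integral_mono_of_nonneg ?_ hInt ?_
          · exact Eventually.of_forall fun τ => abs_nonneg _
          · exact (ae_restrict_mem measurableSet_Ioc).mono fun τ hτ => young l τ hl hτ.1
      _ = l ^ p / p * F t + l ^ (-q) / q * (t ^ (e+1) / (e+1)) := by
          rw [integral_add ((hg_int' t).const_mul _) ((hrpow_int t ht.1).const_mul _),
            integral_const_mul, integral_const_mul, hT t ht.1, hF_def]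
  -- u' is integrable on Ioc 0 t for t ≤ 1
  have hu'int0 : ∀ t : ℝ, t ∈ Ioc (0:ℝ) 1 → IntegrableOn u' (Ioc 0 t) := by
    intro t ht
    have hInt : Integrable (fun τ => (1:ℝ) ^ p / p * g τ + (1:ℝ) ^ (-q) / q * τ ^ e)
        (volume.restrict (Ioc (0:ℝ) t)) :=
      ((hg_int' t).const_mul _).add ((hrpow_int t ht.1).const_mul _)
    refine hInt.mono (hmeas_t t ht.2) ?_
    refine (ae_restrict_mem measurableSet_Ioc).mono fun τ hτ => ?_
    have h1 := young 1 τ one_pos hτ.1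
    have h2 : 0 ≤ (1:ℝ) ^ p / p * g τ + (1:ℝ) ^ (-q) / q * τ ^ e :=
      le_trans (abs_nonneg _) h1
    rw [Real.norm_eq_abs, Real.norm_eq_abs, abs_of_nonneg h2]
    exact h1
  -- the limit L and the representation formula
  set L : ℝ := u 1 - ∫ τ in Ioc (0:ℝ) 1, u' τ with hL_def
  have hrep : ∀ t : ℝ, t ∈ Ioc (0:ℝ) 1 → u t - L = ∫ τ in Ioc (0:ℝ) t, u' τ := by
    intro t ht
    rcases eq_or_lt_of_le ht.2 with h1 | h1
    · rw [h1, hL_def]; ring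
    · have hsplit : ∫ τ in Ioc (0:ℝ) 1, u' τ =
          (∫ τ in Ioc (0:ℝ) t, u' τ) + ∫ τ in Ioc t 1, u' τ := by
        rw [← setIntegral_union (Ioc_disjoint_Ioc_of_le le_rfl) measurableSet_Ioc
          (hu'int0 t ht) (hu'int t 1 ht.1 h1), Ioc_union_Ioc_eq_Ioc ht.1.le ht.2]
      have hftc : u 1 - u t = ∫ τ in Ioc t 1, u' τ := by
        rw [hFTC t 1 ht.1 h1, intervalIntegral.integral_of_le h1.le]
      rw [hL_def, hsplit]
      linarith
  have habs : ∀ t : ℝ, t ∈ Ioc (0:ℝ) 1 → |u t - L| ≤ ∫ τ in Ioc (0:ℝ) t, |u' τ| := by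
    intro t ht
    rw [hrep t ht]
    calc |∫ τ in Ioc (0:ℝ) t, u' τ| = ‖∫ τ in Ioc (0:ℝ) t, u' τ‖ := (Real.norm_eq_abs _).symm
      _ ≤ ∫ τ in Ioc (0:ℝ) t, ‖u' τ‖ := norm_integral_le_integral_norm _
      _ = ∫ τ in Ioc (0:ℝ) t, |u' τ| := by simp [Real.norm_eq_abs]
  -- F tends to 0 at 0⁺
  have hF0 : Tendsto F (𝓝[>] (0:ℝ)) (𝓝 0) := by
    rw [tendsto_iff_seq_tendsto]
    intro x hx
    have hx0 : Tendsto x atTop (𝓝 (0:ℝ)) := hx.mono_right nhdsWithin_le_nhds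
    have hFx : ∀ n, F (x n) = ∫ τ in Ioi (0:ℝ), (Ioc (0:ℝ) (x n)).indicator g τ := by
      intro n
      rw [hF_def, setIntegral_indicator measurableSet_Ioc,
        inter_eq_self_of_subset_right Ioc_subset_Ioi_self]
    have key : Tendsto (fun n => ∫ τ in Ioi (0:ℝ), (Ioc (0:ℝ) (x n)).indicator g τ)
        atTop (𝓝 (∫ τ in Ioi (0:ℝ), (0:ℝ))) := by
      refine tendsto_integral_of_dominated_convergence (fun τ => |g τ|)
        (fun n => (hg_int.aestronglyMeasurable).indicator measurableSet_Ioc)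
        hg_int.abs ?_ ?_
      · intro n
        refine Eventually.of_forall fun τ => ?_
        rw [Real.norm_eq_abs]
        by_cases hτ : τ ∈ Ioc (0:ℝ) (x n)
        · rw [indicator_of_mem hτ]
        · rw [indicator_of_notMem hτ, abs_zero]; exact abs_nonneg _
      · refine (ae_restrict_mem measurableSet_Ioi).mono fun τ hτ => ?_
        have : ∀ᶠ n in atTop, (Ioc (0:ℝ) (x n)).indicator g τ = 0 := by
          have := hx0.eventually (eventually_lt_nhds hτ)
          exact this.mono fun n hn => indicator_of_notMem (fun h => absurd h.2 (not_le.mpr hn)) g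
        exact Tendsto.congr' (this.mono fun n hn => hn.symm) tendsto_const_nhds

    simp only [integral_zero] at key
    exact (Filter.tendsto_congr fun n => (hFx n).symm).mp key
  -- the auxiliary function G = F + id
  set G : ℝ → ℝ := fun t => F t + t with hG_def
  have hG0 : Tendsto G (𝓝[>] (0:ℝ)) (𝓝 0) := by
    have : Tendsto (fun t : ℝ => t) (𝓝[>] (0:ℝ)) (𝓝 0) :=
      tendsto_id.mono_left nhdsWithin_le_nhds
    simpa using hF0.add this
  have hGpos : ∀ t : ℝ, 0 < t → 0 < G t := fun t ht => by
    have := hF_nonneg t; rw [hG_def]; dsimp only; linarith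
  have hFG' : ∀ t : ℝ, 0 ≤ t → F t ≤ G t := fun t ht => by
    rw [hG_def]; dsimp only; linarith
  clear_value G
  -- the main estimate
  have main : ∀ t : ℝ, t ∈ Ioc (0:ℝ) 1 →
      t ^ (-α) * |u t - L| ≤ G t ^ ((1:ℝ)/2) / p + G t ^ (q/(2*p)) / ((e+1) * q) := by
    intro t ht
    have ht0 : (0:ℝ) < t := ht.1
    have hGt : (0:ℝ) < G t := hGpos t ht0
    set l : ℝ := (t ^ α * G t ^ (-(1:ℝ)/2)) ^ (1/p) with hl_def
    have hl : 0 < l := by positivity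
    clear_value l
    have hlp : l ^ p = t ^ α * G t ^ (-(1:ℝ)/2) := by
      rw [hl_def, ← Real.rpow_mul (by positivity), one_div,
        inv_mul_cancel₀ (ne_of_gt hp0), Real.rpow_one]
    have hlq : l ^ (-q) = t ^ (-(α * q / p)) * G t ^ (q/(2*p)) := by
      have e1 : α * (1/p * -q) = -(α * q / p) := by ring
      have e2 : (-(1:ℝ)/2) * (1/p * -q) = q / (2*p) := by
        field_simp
      rw [hl_def, ← Real.rpow_mul (by positivity),
        Real.mul_rpow (by positivity) (by positivity),
        ← Real.rpow_mul ht0.le, ← Real.rpow_mul hGt.le, e1, e2]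
    have hb := bound t ht l hl
    have h1 : t ^ (-α) * (l ^ p / p * F t) ≤ G t ^ ((1:ℝ)/2) / p := by
      rw [hlp]
      have hFG : F t ≤ G t := hFG' t ht0.le
      have hcanc : t ^ (-α) * t ^ α = 1 := by
        rw [← Real.rpow_add ht0]; simp
      have : t ^ (-α) * (t ^ α * G t ^ (-(1:ℝ)/2) / p * F t)
          = (t ^ (-α) * t ^ α) * (G t ^ (-(1:ℝ)/2) * F t / p) := by ring
      rw [this, hcanc, one_mul]
      have hG12 : G t ^ (-(1:ℝ)/2) * G t = G t ^ ((1:ℝ)/2) := by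
        nth_rewrite 2 [← Real.rpow_one (G t)]
        rw [← Real.rpow_add hGt]
        norm_num
      calc G t ^ (-(1:ℝ)/2) * F t / p ≤ G t ^ (-(1:ℝ)/2) * G t / p := by
            have h0 : (0:ℝ) ≤ G t ^ (-(1:ℝ)/2) := Real.rpow_nonneg hGt.le _
            gcongr
        _ = G t ^ ((1:ℝ)/2) / p := by rw [hG12]
    have h2 : t ^ (-α) * (l ^ (-q) / q * (t ^ (e+1) / (e+1)))
        = G t ^ (q/(2*p)) / ((e+1) * q) := by
      rw [hlq]
      have hexp : t ^ (-α) * (t ^ (-(α * q / p)) * t ^ (e+1)) = 1 := by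
        rw [← Real.rpow_add ht0, ← Real.rpow_add ht0, ← hαq]
        have hz : -α + (-(α * q / p) + α * q) = 0 := by
          rw [hα_def, hq_def]; field_simp; ring
        rw [hz]
        exact Real.rpow_zero t
      calc t ^ (-α) * (t ^ (-(α * q / p)) * G t ^ (q/(2*p)) / q * (t ^ (e+1) / (e+1)))
          = (t ^ (-α) * (t ^ (-(α * q / p)) * t ^ (e+1))) * G t ^ (q/(2*p)) / ((e+1) * q) := by
            have hq' : q ≠ 0 := ne_of_gt hq0
            have he' : e + 1 ≠ 0 := ne_of_gt he0
            field_simp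
        _ = G t ^ (q/(2*p)) / ((e+1) * q) := by rw [hexp, one_mul]
    calc t ^ (-α) * |u t - L|
        ≤ t ^ (-α) * (l ^ p / p * F t + l ^ (-q) / q * (t ^ (e+1) / (e+1))) := by
          refine mul_le_mul_of_nonneg_left ?_ (Real.rpow_nonneg ht0.le _)
          exact (habs t ht).trans hb
      _ = t ^ (-α) * (l ^ p / p * F t) + t ^ (-α) * (l ^ (-q) / q * (t ^ (e+1) / (e+1))) := by
          ring
      _ ≤ G t ^ ((1:ℝ)/2) / p + G t ^ (q/(2*p)) / ((e+1) * q) := by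
          rw [h2]; exact add_le_add_left h1 _
  -- the right-hand side tends to 0
  have hrhs : Tendsto (fun t => G t ^ ((1:ℝ)/2) / p + G t ^ (q/(2*p)) / ((e+1) * q))
      (𝓝[>] (0:ℝ)) (𝓝 0) := by
    have c1 : Tendsto (fun t => G t ^ ((1:ℝ)/2)) (𝓝[>] (0:ℝ)) (𝓝 0) := by
      have := (Real.continuousAt_rpow_const 0 ((1:ℝ)/2) (Or.inr (by norm_num : (0:ℝ) ≤ 1/2))).tendsto
      rw [Real.zero_rpow (by norm_num)] at this
      exact this.comp hG0
    have c2 : Tendsto (fun t => G t ^ (q/(2*p))) (𝓝[>] (0:ℝ)) (𝓝 0) := by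
      have hqp : (0:ℝ) < q/(2*p) := by positivity
      have := (Real.continuousAt_rpow_const 0 (q/(2*p)) (Or.inr hqp.le)).tendsto
      rw [Real.zero_rpow (ne_of_gt hqp)] at this
      exact this.comp hG0
    have := (c1.div_const p).add (c2.div_const ((e+1) * q))
    simpa using this
  -- the weighted convergence
  have hmem : ∀ᶠ t in 𝓝[>] (0:ℝ), t ∈ Ioc (0:ℝ) 1 :=
    eventually_mem_set.mpr (Ioc_mem_nhdsGT one_pos)
  have hweighted : Tendsto (fun t => t ^ (-α) * |u t - L|) (𝓝[>] (0:ℝ)) (𝓝 0) := by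
    refine tendsto_of_tendsto_of_tendsto_of_le_of_le' tendsto_const_nhds hrhs ?_ ?_
    · refine hmem.mono fun t ht => ?_
      exact mul_nonneg (Real.rpow_nonneg ht.1.le _) (abs_nonneg _)
    · exact hmem.mono fun t ht => main t ht
  -- conclude
  refine ⟨L, ?_, ?_⟩
  · have htα : Tendsto (fun t : ℝ => t ^ α) (𝓝[>] (0:ℝ)) (𝓝 0) := by
      have := (Real.continuousAt_rpow_const 0 α (Or.inr hα.le)).tendsto
      rw [Real.zero_rpow (ne_of_gt hα)] at this
      exact this.comp (tendsto_id.mono_left nhdsWithin_le_nhds)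
    have hprod := htα.mul hweighted
    rw [mul_zero] at hprod
    have heq : ∀ᶠ t in 𝓝[>] (0:ℝ),
        t ^ α * (t ^ (-α) * |u t - L|) = |u t - L| := by
      refine hmem.mono fun t ht => ?_
      have : t ^ α * t ^ (-α) = 1 := by
        rw [← Real.rpow_add ht.1]; simp
      rw [← mul_assoc, this, one_mul]
    have habs0 : Tendsto (fun t => |u t - L|) (𝓝[>] (0:ℝ)) (𝓝 0) :=
      hprod.congr' heq
    rw [tendsto_iff_dist_tendsto_zero]
    simpa [Real.dist_eq] using habs0
  · have hexp_eq : (β - (p - 1)) / p = -α := by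
      rw [hα_def]; ring
    rw [hexp_eq]
    exact hweighted
end

section
/- Let 1 < p < ∞, β < p−1, and u ∈ W^{1,p}(ℝ₊,t^β). Then lim_{t→0⁺} u(t) = 0 if and only if ∫_0^∞ |u(t)|^p t^{β−p} dt < ∞ (i.e. the set {u ∈ W^{1,p}(ℝ₊,t^β) : lim_{t→0} u(t) = 0} equals Y^{1,p}_{t^β}). -/
open MeasureTheory Set Filter Topology
open scoped ENNReal

section Helpers

section Helpers

lemma lint_rpow_Ioc {r t : ℝ} (hr : -1 < r) (ht : 0 < t) :
    ∫⁻ s in Ioc (0:ℝ) t, ENNReal.ofReal (s ^ r) = ENNReal.ofReal (t ^ (r+1) / (r+1)) := by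
  have hint : IntegrableOn (fun s : ℝ => s ^ r) (Ioc 0 t) := by
    rw [integrableOn_Ioc_iff_integrableOn_Ioo]
    exact (intervalIntegral.integrableOn_Ioo_rpow_iff ht).2 hr
  rw [← ofReal_integral_eq_lintegral_ofReal hint ?nn]
  case nn =>
    filter_upwards [ae_restrict_mem measurableSet_Ioc] with s hs
    exact Real.rpow_nonneg hs.1.le r
  congr 1
  rw [← intervalIntegral.integral_of_le ht.le, integral_rpow (Or.inl hr),
    Real.zero_rpow (by linarith), sub_zero]

lemma lint_rpow_Ici {r t : ℝ} (hr : r < -1) (ht : 0 < t) :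
    ∫⁻ s in Ici t, ENNReal.ofReal (s ^ r) = ENNReal.ofReal (-t ^ (r+1) / (r+1)) := by
  rw [setLIntegral_congr (Filter.EventuallyEq.symm Ioi_ae_eq_Ici),
    ← ofReal_integral_eq_lintegral_ofReal (integrableOn_Ioi_rpow_of_lt hr ht) ?nn]
  case nn =>
    filter_upwards [ae_restrict_mem measurableSet_Ioi] with s hs
    exact Real.rpow_nonneg (ht.trans hs).le r
  rw [integral_Ioi_rpow_of_lt hr ht]

lemma holder_step {p c : ℝ} (hp : 1 < p) (hc : c < p - 1)
    {g : ℝ → ℝ≥0∞} (hg : Measurable g) {t : ℝ} (ht : 0 < t) :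
    ∫⁻ s in Ioc (0:ℝ) t, g s ≤
      (∫⁻ s in Ioc (0:ℝ) t, g s ^ p * ENNReal.ofReal (s ^ c)) ^ (1/p) *
      ENNReal.ofReal (t ^ (1 - c/(p-1)) / (1 - c/(p-1))) ^ (1/(p/(p-1))) := by
  have hp0 : (0:ℝ) < p := by linarith
  have hp1 : (0:ℝ) < p - 1 := by linarith
  have hconj : p.HolderConjugate (p/(p-1)) := (Real.holderConjugate_iff_eq_conjExponent hp).2 rfl
  have key : ∀ᵐ s ∂(volume.restrict (Ioc (0:ℝ) t)),
      g s = (g s * ENNReal.ofReal (s ^ (c/p))) * ENNReal.ofReal (s ^ (-(c/p))) := by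
    filter_upwards [ae_restrict_mem measurableSet_Ioc] with s hs
    rw [mul_assoc, ← ENNReal.ofReal_mul (Real.rpow_nonneg hs.1.le _),
      ← Real.rpow_add hs.1]
    simp
  rw [lintegral_congr_ae key]
  have h1 : AEMeasurable (fun s => g s * ENNReal.ofReal (s ^ (c/p)))
      (volume.restrict (Ioc (0:ℝ) t)) :=
    (hg.mul ((measurable_id.pow_const _).ennreal_ofReal)).aemeasurable
  have h2 : AEMeasurable (fun s : ℝ => ENNReal.ofReal (s ^ (-(c/p))))
      (volume.restrict (Ioc (0:ℝ) t)) :=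
    ((measurable_id.pow_const _).ennreal_ofReal).aemeasurable
  refine le_trans (ENNReal.lintegral_mul_le_Lp_mul_Lq _ hconj h1 h2) ?_
  have e1 : ∫⁻ s in Ioc (0:ℝ) t, (g s * ENNReal.ofReal (s ^ (c/p))) ^ p
      = ∫⁻ s in Ioc (0:ℝ) t, g s ^ p * ENNReal.ofReal (s ^ c) := by
    apply lintegral_congr_ae
    filter_upwards [ae_restrict_mem measurableSet_Ioc] with s hs
    rw [ENNReal.mul_rpow_of_nonneg _ _ hp0.le,
      ENNReal.ofReal_rpow_of_pos (Real.rpow_pos_of_pos hs.1 _),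
      ← Real.rpow_mul hs.1.le, div_mul_cancel₀ _ hp0.ne']
  have e2 : ∫⁻ s in Ioc (0:ℝ) t, ENNReal.ofReal (s ^ (-(c/p))) ^ (p/(p-1))
      = ENNReal.ofReal (t ^ (1 - c/(p-1)) / (1 - c/(p-1))) := by
    have expeq : ∀ s : ℝ, 0 < s →
        ENNReal.ofReal (s ^ (-(c/p))) ^ (p/(p-1)) = ENNReal.ofReal (s ^ (-(c/(p-1)))) := by
      intro s hs
      rw [ENNReal.ofReal_rpow_of_pos (Real.rpow_pos_of_pos hs _), ← Real.rpow_mul hs.le]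
      congr 2
      field_simp
    rw [lintegral_congr_ae ((ae_restrict_mem measurableSet_Ioc).mono
      (fun s hs => expeq s hs.1)),
      lint_rpow_Ioc (by rw [neg_lt, neg_neg]; rw [div_lt_one hp1]; linarith) ht]
    congr 2 <;> ring
  rw [e1, e2]

lemma tonelli {γ : ℝ} (hγ : 0 < γ) {G : ℝ → ℝ≥0∞} (hG : Measurable G) :
    ∫⁻ t in Ioi (0:ℝ), (∫⁻ s in Ioc (0:ℝ) t, G s) * ENNReal.ofReal (t ^ (-1-γ))
      = ∫⁻ s in Ioi (0:ℝ), G s * ENNReal.ofReal (s ^ (-γ) / γ) := by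
  set S : Set (ℝ × ℝ) := {q : ℝ × ℝ | 0 < q.2 ∧ q.2 ≤ q.1} with hS
  have hSm : MeasurableSet S :=
    (measurable_snd measurableSet_Ioi).inter (measurableSet_le measurable_snd measurable_fst)
  set H : ℝ × ℝ → ℝ≥0∞ :=
    S.indicator (fun q => G q.2 * ENNReal.ofReal (q.1 ^ (-1-γ))) with hH
  have hHm : Measurable H :=
    Measurable.indicator ((hG.comp measurable_snd).mul
      ((measurable_fst.pow_const _).ennreal_ofReal)) hSm
  have left : ∀ t : ℝ, t ∈ Ioi 0 →
      (∫⁻ s, H (t, s)) = (∫⁻ s in Ioc (0:ℝ) t, G s) * ENNReal.ofReal (t ^ (-1-γ)) := by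
    intro t ht
    have e : ∀ s : ℝ, H (t, s) =
        (Ioc (0:ℝ) t).indicator (fun s => G s * ENNReal.ofReal (t ^ (-1-γ))) s := by
      intro s
      by_cases h : s ∈ Ioc (0:ℝ) t
      · rw [indicator_of_mem h, hH,
          indicator_of_mem (show (t, s) ∈ S from ⟨h.1, h.2⟩)]
      · rw [indicator_of_notMem h, hH,
          indicator_of_notMem (show (t, s) ∉ S from fun hq => h ⟨hq.1, hq.2⟩)]
    rw [lintegral_congr e, lintegral_indicator measurableSet_Ioc,
      lintegral_mul_const'' _ (hG.aemeasurable.restrict)]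
  have right : ∀ s : ℝ, (∫⁻ t, H (t, s)) =
      (Ioi (0:ℝ)).indicator (fun s => G s * ENNReal.ofReal (s ^ (-γ) / γ)) s := by
    intro s
    by_cases hs : 0 < s
    · have e : ∀ t : ℝ, H (t, s) =
          (Ici s).indicator (fun t => G s * ENNReal.ofReal (t ^ (-1-γ))) t := by
        intro t
        by_cases h : t ∈ Ici s
        · rw [indicator_of_mem h, hH,
            indicator_of_mem (show (t, s) ∈ S from ⟨hs, h⟩)]
        · rw [indicator_of_notMem h, hH,
            indicator_of_notMem (show (t, s) ∉ S from fun hq => h hq.2)]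
      rw [lintegral_congr e, lintegral_indicator measurableSet_Ici,
        lintegral_const_mul'' _
          (show AEMeasurable (fun a : ℝ => ENNReal.ofReal (a ^ (-1-γ)))
            (volume.restrict (Ici s)) from
            ((measurable_id.pow_const _).ennreal_ofReal).aemeasurable),
        lint_rpow_Ici (by linarith) hs, indicator_of_mem (show s ∈ Ioi (0:ℝ) from hs)]
      congr 2
      rw [show -1 - γ + 1 = -γ by ring, div_neg, neg_div, neg_neg]
    · have e : ∀ t : ℝ, H (t, s) = 0 := fun t =>
        indicator_of_notMem (show (t, s) ∉ S from fun hq => hs hq.1) _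
      rw [lintegral_congr e, lintegral_zero,
        indicator_of_notMem (by simpa using hs)]
  have ext : ∀ t : ℝ, (Ioi (0:ℝ)).indicator (fun t => ∫⁻ s, H (t, s)) t = ∫⁻ s, H (t, s) := by
    intro t
    by_cases ht : t ∈ Ioi (0:ℝ)
    · rw [indicator_of_mem ht]
    · rw [indicator_of_notMem ht]
      have e : ∀ s : ℝ, H (t, s) = 0 := fun s =>
        indicator_of_notMem (show (t, s) ∉ S from fun hq => ht (hq.1.trans_le hq.2)) _
      rw [lintegral_congr e, lintegral_zero]
  calc ∫⁻ t in Ioi (0:ℝ), (∫⁻ s in Ioc (0:ℝ) t, G s) * ENNReal.ofReal (t ^ (-1-γ))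
      = ∫⁻ t in Ioi (0:ℝ), ∫⁻ s, H (t, s) :=
        (setLIntegral_congr_fun measurableSet_Ioi
          (fun t ht => (left t ht).symm))
    _ = ∫⁻ t, ∫⁻ s, H (t, s) := by
        rw [← lintegral_indicator measurableSet_Ioi]
        exact lintegral_congr ext
    _ = ∫⁻ s, ∫⁻ t, H (t, s) :=
        lintegral_lintegral_swap
          (show AEMeasurable (Function.uncurry fun t s => H (t, s)) (volume.prod volume)
            from hHm.aemeasurable)
    _ = ∫⁻ s, (Ioi (0:ℝ)).indicator (fun s => G s * ENNReal.ofReal (s ^ (-γ) / γ)) s :=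
        lintegral_congr right
    _ = ∫⁻ s in Ioi (0:ℝ), G s * ENNReal.ofReal (s ^ (-γ) / γ) :=
        lintegral_indicator measurableSet_Ioi _

lemma hardy {p β : ℝ} (hp : 1 < p) (hβ : β < p - 1) {g : ℝ → ℝ≥0∞} (hg : Measurable g) :
    ∃ C : ℝ≥0∞, C ≠ ⊤ ∧
    ∫⁻ t in Ioi (0:ℝ), (∫⁻ s in Ioc (0:ℝ) t, g s) ^ p * ENNReal.ofReal (t ^ (β - p))
      ≤ C * ∫⁻ s in Ioi (0:ℝ), g s ^ p * ENNReal.ofReal (s ^ β) := by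
  have hp0 : (0:ℝ) < p := by linarith
  have hp1 : (0:ℝ) < p - 1 := by linarith
  set γ : ℝ := (p - 1 - β) / 2 with hγdef
  have hγ : 0 < γ := by simp only [hγdef]; linarith
  set c : ℝ := β + γ with hcdef
  have hc : c < p - 1 := by simp only [hcdef, hγdef]; linarith
  set α : ℝ := c / (p - 1) with hαdef
  have hα1 : 0 < 1 - α := by
    have : α < 1 := by rw [hαdef, div_lt_one hp1]; linarith
    linarith
  set K1 : ℝ := (1 - α)⁻¹ ^ (p - 1) with hK1
  have hK1nn : 0 ≤ K1 := Real.rpow_nonneg (inv_nonneg.2 hα1.le) _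
  set G : ℝ → ℝ≥0∞ := fun s => g s ^ p * ENNReal.ofReal (s ^ c) with hG
  have hGm : Measurable G := (hg.pow_const p).mul ((measurable_id.pow_const c).ennreal_ofReal)
  refine ⟨ENNReal.ofReal K1 * ENNReal.ofReal γ⁻¹, by finiteness, ?_⟩
  have pointwise : ∀ t : ℝ, t ∈ Ioi (0:ℝ) →
      (∫⁻ s in Ioc (0:ℝ) t, g s) ^ p * ENNReal.ofReal (t ^ (β - p))
        ≤ ENNReal.ofReal K1 * ((∫⁻ s in Ioc (0:ℝ) t, G s) * ENNReal.ofReal (t ^ (-1-γ))) := by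
    intro t ht
    rw [mem_Ioi] at ht
    have h := ENNReal.rpow_le_rpow (holder_step hp hc hg ht) hp0.le
    rw [ENNReal.mul_rpow_of_nonneg _ _ hp0.le, ← ENNReal.rpow_mul, ← ENNReal.rpow_mul,
      one_div_mul_cancel hp0.ne', ENNReal.rpow_one,
      show 1/(p/(p-1)) * p = p - 1 by field_simp] at h
    have hD : 0 < t ^ (1 - α) / (1 - α) := div_pos (Real.rpow_pos_of_pos ht _) hα1
    calc (∫⁻ s in Ioc (0:ℝ) t, g s) ^ p * ENNReal.ofReal (t ^ (β - p))
        ≤ ((∫⁻ s in Ioc (0:ℝ) t, G s) * ENNReal.ofReal (t ^ (1-α) / (1-α)) ^ (p-1)) *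
            ENNReal.ofReal (t ^ (β - p)) := mul_le_mul_left h _
      _ = ENNReal.ofReal K1 * ((∫⁻ s in Ioc (0:ℝ) t, G s) * ENNReal.ofReal (t ^ (-1-γ))) := by
          rw [ENNReal.ofReal_rpow_of_pos hD, mul_assoc,
            ← ENNReal.ofReal_mul (Real.rpow_nonneg hD.le _)]
          rw [show (t ^ (1-α) / (1-α)) ^ (p-1) * t ^ (β-p) = K1 * t ^ (-1-γ) by
            rw [Real.div_rpow (Real.rpow_pos_of_pos ht _).le hα1.le,
              ← Real.rpow_mul ht.le, div_eq_mul_inv, ← Real.inv_rpow hα1.le, ← hK1,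
              mul_assoc, mul_comm K1 (t ^ (β-p)), ← mul_assoc, ← Real.rpow_add ht,
              show (1-α) * (p-1) + (β-p) = -1-γ by
                rw [hαdef]; field_simp; rw [hcdef]; ring,
              mul_comm]]
          rw [ENNReal.ofReal_mul hK1nn]
          ring
  calc ∫⁻ t in Ioi (0:ℝ), (∫⁻ s in Ioc (0:ℝ) t, g s) ^ p * ENNReal.ofReal (t ^ (β - p))
      ≤ ∫⁻ t in Ioi (0:ℝ),
          ENNReal.ofReal K1 * ((∫⁻ s in Ioc (0:ℝ) t, G s) * ENNReal.ofReal (t ^ (-1-γ))) := by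
        apply lintegral_mono_ae
        filter_upwards [ae_restrict_mem measurableSet_Ioi] with t ht
        exact pointwise t ht
    _ = ENNReal.ofReal K1 *
          ∫⁻ t in Ioi (0:ℝ), (∫⁻ s in Ioc (0:ℝ) t, G s) * ENNReal.ofReal (t ^ (-1-γ)) :=
        lintegral_const_mul' _ _ ENNReal.ofReal_ne_top
    _ = ENNReal.ofReal K1 * ∫⁻ s in Ioi (0:ℝ), G s * ENNReal.ofReal (s ^ (-γ) / γ) := by
        rw [tonelli hγ hGm]
    _ = ENNReal.ofReal K1 * (ENNReal.ofReal γ⁻¹ *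
          ∫⁻ s in Ioi (0:ℝ), g s ^ p * ENNReal.ofReal (s ^ β)) := by
        congr 1
        rw [← lintegral_const_mul' _ _ ENNReal.ofReal_ne_top]
        apply lintegral_congr_ae
        filter_upwards [ae_restrict_mem measurableSet_Ioi] with s hs
        rw [mem_Ioi] at hs
        simp only [hG]
        rw [div_eq_mul_inv, ENNReal.ofReal_mul (Real.rpow_nonneg hs.le _), ← mul_assoc,
          mul_assoc (g s ^ p), ← ENNReal.ofReal_mul (Real.rpow_nonneg hs.le _),
          ← Real.rpow_add hs, show c + -γ = β by rw [hcdef]; ring]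
        ring
    _ = ENNReal.ofReal K1 * ENNReal.ofReal γ⁻¹ *
          ∫⁻ s in Ioi (0:ℝ), g s ^ p * ENNReal.ofReal (s ^ β) := by rw [mul_assoc]

end Helpers

/-- for `β < p-1` and `u ∈ W^{1,p}(ℝ₊,t^β)`:
`lim_{t→0⁺} u(t) = 0` iff `∫_0^∞ |u|^p t^{β-p} dt < ∞` (i.e. `u ∈ Y^{1,p}_{t^β}`). -/
theorem stmt8 (p β : ℝ) (hp : 1 < p) (hβ : β < p - 1)
    (u u' : ℝ → ℝ) (hu : MemW p β u u') :
    Tendsto u (𝓝[>] (0:ℝ)) (𝓝 0) ↔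
      IntegrableOn (fun t => |u t| ^ p * t ^ (β - p)) (Ioi (0:ℝ)) := by
  obtain ⟨hcont, hloc, hftc, hIu, hIu'⟩ := hu
  have hp0 : (0:ℝ) < p := by linarith
  -- a.e.-strong measurability of u' on (0, ∞)
  have hUnion : Ioi (0:ℝ) = ⋃ n : ℕ, Ioc (1/(n+1) : ℝ) ((n:ℝ)+2) := by
    ext x
    simp only [mem_Ioi, mem_iUnion, mem_Ioc]
    constructor
    · intro hx
      obtain ⟨n, hn⟩ := exists_nat_gt (max x (1/x))
      refine ⟨n, ?_, ?_⟩
      · rw [div_lt_iff₀ (by positivity)]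
        have h1 : 1/x < n := (le_max_right _ _).trans_lt hn
        rw [div_lt_iff₀ hx] at h1
        nlinarith
      · have := (le_max_left x (1/x)).trans_lt hn
        linarith
    · rintro ⟨n, h1, h2⟩
      exact lt_trans (by positivity) h1
  have hsm : AEStronglyMeasurable u' (volume.restrict (Ioi (0:ℝ))) := by
    rw [hUnion, aestronglyMeasurable_iUnion_iff]
    intro n
    exact (hloc _ _ (by positivity) (by
      have : (1:ℝ)/(n+1) ≤ 1 := by
        rw [div_le_one (by positivity)]; simp
      linarith)).aestronglyMeasurable
  -- a measurable ℝ≥0∞-valued version of |u'|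
  obtain ⟨v, hvm, hveq⟩ := hsm.aemeasurable
  set g : ℝ → ℝ≥0∞ := fun s => ENNReal.ofReal ‖v s‖ with hgdef
  have hgm : Measurable g := hvm.norm.ennreal_ofReal
  have hgeq : ∀ᵐ s ∂(volume.restrict (Ioi (0:ℝ))),
      ENNReal.ofReal ‖u' s‖ = g s := hveq.mono fun s h => by rw [hgdef]; simp only; rw [h]
  -- finiteness of the weighted norm of u'
  have hJ : (∫⁻ s in Ioi (0:ℝ), g s ^ p * ENNReal.ofReal (s ^ β)) ≠ ⊤ := by
    have e : ∀ᵐ s ∂(volume.restrict (Ioi (0:ℝ))),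
        g s ^ p * ENNReal.ofReal (s ^ β) = (‖|u' s| ^ p * s ^ β‖₊ : ℝ≥0∞) := by
      filter_upwards [hgeq, ae_restrict_mem measurableSet_Ioi] with s hg hs
      rw [mem_Ioi] at hs
      rw [← hg, ENNReal.ofReal_rpow_of_nonneg (norm_nonneg _) hp0.le,
        ← ENNReal.ofReal_mul (by positivity), ← enorm_eq_nnnorm, Real.enorm_eq_ofReal (by positivity),
        Real.norm_eq_abs]
    rw [lintegral_congr_ae e]
    exact hIu'.hasFiniteIntegral.ne
  -- lintegral of g over (0, t] coincides with that of ofReal ‖u'‖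
  have hIocg : ∀ t : ℝ, ∫⁻ s in Ioc (0:ℝ) t, ENNReal.ofReal ‖u' s‖ = ∫⁻ s in Ioc (0:ℝ) t, g s :=
    fun t => lintegral_congr_ae (ae_restrict_of_ae_restrict_of_subset Ioc_subset_Ioi_self hgeq)
  -- u' is integrable on (0, b] for every b > 0
  have hu'int : ∀ b : ℝ, 0 < b → IntegrableOn u' (Ioc 0 b) := by
    intro b hb
    refine ⟨hsm.mono_measure (Measure.restrict_mono Ioc_subset_Ioi_self le_rfl), ?_⟩
    rw [HasFiniteIntegral]
    have h1 : (∫⁻ s in Ioc (0:ℝ) b, g s ^ p * ENNReal.ofReal (s ^ β)) ^ (1/p) ≠ ⊤ :=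
      ENNReal.rpow_ne_top_of_nonneg (by positivity)
        ((lintegral_mono_set Ioc_subset_Ioi_self).trans_lt (lt_top_iff_ne_top.2 hJ)).ne
    have h2 : ENNReal.ofReal (b ^ (1 - β/(p-1)) / (1 - β/(p-1))) ^ (1/(p/(p-1))) ≠ ⊤ :=
      ENNReal.rpow_ne_top_of_nonneg
        (div_nonneg zero_le_one (div_nonneg hp0.le (by linarith))) ENNReal.ofReal_ne_top
    calc ∫⁻ s in Ioc (0:ℝ) b, (‖u' s‖₊ : ℝ≥0∞)
        = ∫⁻ s in Ioc (0:ℝ) b, g s := by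
          rw [← hIocg b]
          exact lintegral_congr fun s => by rw [← enorm_eq_nnnorm, ofReal_norm]
      _ ≤ _ := holder_step hp hβ hgm hb
      _ < ⊤ := ENNReal.mul_lt_top (lt_top_iff_ne_top.2 h1) (lt_top_iff_ne_top.2 h2)
  -- convergence of the tail integrals
  have hlim : ∀ t : ℝ, 0 < t → Tendsto (fun a => ∫ s in Ioc a t, u' s) (𝓝[>] (0:ℝ))
      (𝓝 (∫ s in Ioc (0:ℝ) t, u' s)) := by
    intro t ht
    have hI : IntegrableOn u' (Ioc 0 t) := hu'int t ht
    have key := tendsto_integral_filter_of_dominated_convergence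
      (F := fun (a : ℝ) (s : ℝ) => (Ioc a t).indicator u' s)
      (f := (Ioc (0:ℝ) t).indicator u') (μ := volume)
      (bound := (Ioc (0:ℝ) t).indicator (fun s => ‖u' s‖))
      (l := 𝓝[>] (0:ℝ)) ?meas ?bdd ?bint ?ptw
    case meas =>
      filter_upwards [self_mem_nhdsWithin] with a (ha : 0 < a)
      rw [aestronglyMeasurable_indicator_iff measurableSet_Ioc]
      exact hsm.mono_measure (Measure.restrict_mono
        (fun x hx => lt_trans ha hx.1) le_rfl)
    case bdd =>
      filter_upwards [self_mem_nhdsWithin] with a (ha : 0 < a)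
      refine Filter.Eventually.of_forall fun s => ?_
      calc ‖(Ioc a t).indicator u' s‖
          ≤ ‖(Ioc (0:ℝ) t).indicator u' s‖ :=
            norm_indicator_le_of_subset (Ioc_subset_Ioc_left ha.le) _ _
        _ = (Ioc (0:ℝ) t).indicator (fun s => ‖u' s‖) s :=
            norm_indicator_eq_indicator_norm u' s
    case bint => exact IntegrableOn.integrable_indicator hI.norm measurableSet_Ioc
    case ptw =>
      refine Filter.Eventually.of_forall fun s => ?_
      by_cases hs : s ∈ Ioc (0:ℝ) t
      · rw [indicator_of_mem hs]
        refine Tendsto.congr' ?_ (tendsto_const_nhds (α := ℝ) (x := u' s))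
        filter_upwards [Ioo_mem_nhdsGT_of_mem (left_mem_Ico.2 hs.1)] with a ha
        rw [indicator_of_mem (show s ∈ Ioc a t from ⟨ha.2, hs.2⟩)]
      · rw [indicator_of_notMem hs]
        refine Tendsto.congr' ?_ (tendsto_const_nhds (α := ℝ) (x := 0))
        filter_upwards [self_mem_nhdsWithin] with a (ha : 0 < a)
        rw [indicator_of_notMem
          (fun hmem => hs ⟨lt_trans ha hmem.1, hmem.2⟩)]
    have e1 : (fun a : ℝ => ∫ s, (Ioc a t).indicator u' s) = fun a => ∫ s in Ioc a t, u' s :=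
      funext fun a => integral_indicator measurableSet_Ioc
    have e2 : ∫ s, (Ioc (0:ℝ) t).indicator u' s = ∫ s in Ioc (0:ℝ) t, u' s :=
      integral_indicator measurableSet_Ioc
    rwa [e1, e2] at key
  -- the limit of u at 0⁺
  set L : ℝ := u 1 - ∫ s in Ioc (0:ℝ) 1, u' s with hLdef
  have hulim : ∀ t : ℝ, 0 < t →
      Tendsto u (𝓝[>] (0:ℝ)) (𝓝 (u t - ∫ s in Ioc (0:ℝ) t, u' s)) := by
    intro t ht
    refine Tendsto.congr' ?_ (tendsto_const_nhds.sub (hlim t ht))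
    filter_upwards [Ioo_mem_nhdsGT_of_mem (left_mem_Ico.2 ht)] with a ha
    have := hftc a t ha.1 ha.2
    rw [intervalIntegral.integral_of_le ha.2.le] at this
    have : u a = u t - ∫ s in Ioc a t, u' s := by linarith
    rw [← this]
  have huL : Tendsto u (𝓝[>] (0:ℝ)) (𝓝 L) := hulim 1 one_pos
  have hrep : ∀ t : ℝ, 0 < t → u t = L + ∫ s in Ioc (0:ℝ) t, u' s := by
    intro t ht
    have := tendsto_nhds_unique (hulim t ht) huL
    linarith
  constructor
  · -- tendsto → integrable
    intro h0
    have hL0 : L = 0 := tendsto_nhds_unique huL h0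
    have hrep0 : ∀ t : ℝ, 0 < t → u t = ∫ s in Ioc (0:ℝ) t, u' s := by
      intro t ht; rw [hrep t ht, hL0, zero_add]
    have hum : AEMeasurable u (volume.restrict (Ioi (0:ℝ))) :=
      hcont.aemeasurable measurableSet_Ioi
    have hFm : AEStronglyMeasurable (fun t => |u t| ^ p * t ^ (β - p))
        (volume.restrict (Ioi (0:ℝ))) := by
      have h1 : AEMeasurable (fun t => |u t|) (volume.restrict (Ioi (0:ℝ))) :=
        continuous_abs.measurable.comp_aemeasurable hum
      have h2 : AEMeasurable (fun t => |u t| ^ p) (volume.restrict (Ioi (0:ℝ))) :=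
        (measurable_id.pow_const p).comp_aemeasurable h1
      exact (h2.mul ((measurable_id.pow_const (β - p)).aemeasurable)).aestronglyMeasurable
    refine ⟨hFm, ?_⟩
    rw [HasFiniteIntegral]
    obtain ⟨C, hC, hhardy⟩ := hardy hp hβ hgm
    have ptwise : ∀ᵐ t ∂(volume.restrict (Ioi (0:ℝ))),
        (‖|u t| ^ p * t ^ (β - p)‖₊ : ℝ≥0∞)
          ≤ (∫⁻ s in Ioc (0:ℝ) t, g s) ^ p * ENNReal.ofReal (t ^ (β - p)) := by
      filter_upwards [ae_restrict_mem measurableSet_Ioi] with t ht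
      rw [mem_Ioi] at ht
      have hb : ENNReal.ofReal |u t| ≤ ∫⁻ s in Ioc (0:ℝ) t, g s := by
        rw [← hIocg t, hrep0 t ht]
        calc ENNReal.ofReal |∫ s in Ioc (0:ℝ) t, u' s|
            ≤ ENNReal.ofReal (∫ s in Ioc (0:ℝ) t, ‖u' s‖) := by
              apply ENNReal.ofReal_le_ofReal
              rw [← Real.norm_eq_abs]
              exact norm_integral_le_integral_norm u'
          _ = ∫⁻ s in Ioc (0:ℝ) t, ENNReal.ofReal ‖u' s‖ :=
              ofReal_integral_eq_lintegral_ofReal (hu'int t ht).norm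
                (Filter.Eventually.of_forall fun s => norm_nonneg _)
      calc (‖|u t| ^ p * t ^ (β - p)‖₊ : ℝ≥0∞)
          = ENNReal.ofReal |u t| ^ p * ENNReal.ofReal (t ^ (β - p)) := by
            rw [← enorm_eq_nnnorm, Real.enorm_eq_ofReal (by positivity),
              ENNReal.ofReal_mul (by positivity),
              ← ENNReal.ofReal_rpow_of_nonneg (abs_nonneg _) hp0.le]
        _ ≤ _ := mul_le_mul_left (ENNReal.rpow_le_rpow hb hp0.le) _
    calc ∫⁻ t in Ioi (0:ℝ), (‖|u t| ^ p * t ^ (β - p)‖₊ : ℝ≥0∞)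
        ≤ ∫⁻ t in Ioi (0:ℝ), (∫⁻ s in Ioc (0:ℝ) t, g s) ^ p * ENNReal.ofReal (t ^ (β - p)) :=
          lintegral_mono_ae ptwise
      _ ≤ C * ∫⁻ s in Ioi (0:ℝ), g s ^ p * ENNReal.ofReal (s ^ β) := hhardy
      _ < ⊤ := ENNReal.mul_lt_top (lt_top_iff_ne_top.2 hC) (lt_top_iff_ne_top.2 hJ)
  · -- integrable → tendsto
    intro hint
    have hL0 : L = 0 := by
      by_contra hL0
      have hpos : 0 < |L| := abs_pos.2 hL0
      have habs : Tendsto (fun t => |u t|) (𝓝[>] (0:ℝ)) (𝓝 |L|) := huL.abs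
      have hev : ∀ᶠ t in 𝓝[>] (0:ℝ), |L|/2 < |u t| :=
        habs.eventually (eventually_gt_nhds (by linarith))
      obtain ⟨δ, hδ, hsub⟩ := mem_nhdsGT_iff_exists_Ioo_subset.1 hev
      rw [mem_Ioi] at hδ
      have hIoo : IntegrableOn (fun t : ℝ => t ^ (β - p)) (Ioo 0 δ) := by
        refine Integrable.mono' (g := fun t => (2/|L|) ^ p * (|u t| ^ p * t ^ (β - p)))
          (((hint.mono_set Ioo_subset_Ioi_self)).const_mul _)
          (measurable_id.pow_const (β - p)).aestronglyMeasurable ?_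
        filter_upwards [ae_restrict_mem measurableSet_Ioo] with t ht
        have htpos : 0 < t := ht.1
        have hut : |L|/2 < |u t| := hsub ht
        have h1 : (1:ℝ) ≤ (2/|L|) ^ p * |u t| ^ p := by
          rw [← Real.mul_rpow (by positivity) (abs_nonneg _)]
          calc (1:ℝ) = 1 ^ p := (Real.one_rpow p).symm
            _ ≤ (2/|L| * |u t|) ^ p := by
                apply Real.rpow_le_rpow zero_le_one ?_ hp0.le
                rw [div_mul_eq_mul_div, le_div_iff₀ hpos]
                linarith
        rw [Real.norm_eq_abs, abs_of_nonneg (Real.rpow_nonneg htpos.le _), ← mul_assoc]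
        nlinarith [Real.rpow_nonneg htpos.le (β - p),
          mul_le_mul_of_nonneg_right h1 (Real.rpow_nonneg htpos.le (β - p))]
      rw [intervalIntegral.integrableOn_Ioo_rpow_iff hδ] at hIoo
      linarith
    rwa [hL0] at huL
end Helpers
end

section
/- Let 1 < p < ∞ and β > p−1. Then every u ∈ W^{1,p}(ℝ₊,t^β) satisfies lim_{t→∞} u(t) = 0 and moreover lim_{t→∞} t^{(β−(p−1))/p} u(t) = 0. -/
open MeasureTheory Set Filter Topology

lemma memLp_of_integrable_rpow {p : ℝ} {μ : Measure ℝ} {f : ℝ → ℝ} (hp : 0 < p)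
    (hf : AEStronglyMeasurable f μ) (hnn : 0 ≤ᵐ[μ] f)
    (hint : Integrable (fun x => f x ^ p) μ) :
    MemLp f (ENNReal.ofReal p) μ := by
  have hq0 : (ENNReal.ofReal p) ≠ 0 := by simp [ENNReal.ofReal_eq_zero, not_le, hp]
  have hqt : (ENNReal.ofReal p) ≠ ⊤ := ENNReal.ofReal_ne_top
  have h := (memLp_norm_rpow_iff (q := ENNReal.ofReal p) (p := ENNReal.ofReal p) hf hq0 hqt)
  rw [ENNReal.div_self hq0 hqt] at h
  refine h.mp ?_
  rw [memLp_one_iff_integrable]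
  refine hint.congr ?_
  filter_upwards [hnn] with x hx
  rw [Real.norm_of_nonneg hx, ENNReal.toReal_ofReal hp.le]

lemma holder_Ioc {p β : ℝ} {u' : ℝ → ℝ} (hp : 1 < p) {t s : ℝ} (ht : 0 < t) (hts : t < s)
    (hu' : IntegrableOn u' (Ioc t s))
    (hint : IntegrableOn (fun x => |u' x| ^ p * x ^ β) (Ioc t s)) :
    ∫ x in Ioc t s, |u' x| ≤ (∫ x in Ioc t s, |u' x| ^ p * x ^ β) ^ (1/p) *
      (∫ x in Ioc t s, x ^ (-(β/(p-1)))) ^ (1/(p/(p-1))) := by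
  have hp0 : (0:ℝ) < p := lt_trans zero_lt_one hp
  have hp1 : (0:ℝ) < p - 1 := by linarith
  have hpq : p.HolderConjugate (p/(p-1)) := Real.HolderConjugate.conjExponent hp
  set q : ℝ := p / (p - 1) with hq
  have hq0 : 0 < q := hpq.symm.pos
  set μ : Measure ℝ := volume.restrict (Ioc t s) with hμ
  have hae : ∀ᵐ x ∂μ, x ∈ Ioc t s := ae_restrict_mem measurableSet_Ioc
  have haepos : ∀ᵐ x ∂μ, 0 < x := by
    filter_upwards [hae] with x hx; exact ht.trans hx.1
  set F : ℝ → ℝ := fun x => |u' x| * x ^ (β/p) with hF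
  set G : ℝ → ℝ := fun x => x ^ (-(β/p)) with hG
  have hFG : (fun x => F x * G x) =ᶠ[ae μ] (fun x => |u' x|) := by
    filter_upwards [haepos] with x hx
    simp only [hF, hG, mul_assoc]
    rw [← Real.rpow_add hx]
    simp
  have hFp : (fun x => F x ^ p) =ᶠ[ae μ] (fun x => |u' x| ^ p * x ^ β) := by
    filter_upwards [haepos] with x hx
    simp only [hF]
    rw [Real.mul_rpow (abs_nonneg _) (Real.rpow_nonneg hx.le _), ← Real.rpow_mul hx.le,
      div_mul_cancel₀ _ hp0.ne']
  have hGq : (fun x => G x ^ q) =ᶠ[ae μ] (fun x => x ^ (-(β/(p-1)))) := by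
    filter_upwards [haepos] with x hx
    simp only [hG]
    rw [← Real.rpow_mul hx.le]
    congr 1
    field_simp
    rw [mul_assoc, mul_comm q, hpq.sub_one_mul_conj]
  -- measurability
  have hcont : ∀ c : ℝ, ContinuousOn (fun x : ℝ => x ^ c) (Ioc t s) := by
    intro c x hx
    exact (Real.continuousAt_rpow_const x c (Or.inl (ht.trans hx.1).ne')).continuousWithinAt
  have hmG : AEStronglyMeasurable G μ :=
    ((hcont (-(β/p))).aestronglyMeasurable measurableSet_Ioc)
  have habs : AEStronglyMeasurable (fun x => |u' x|) μ := by
    simpa [Real.norm_eq_abs] using hu'.aestronglyMeasurable.norm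
  have hmF : AEStronglyMeasurable F μ :=
    habs.mul ((hcont (β/p)).aestronglyMeasurable measurableSet_Ioc)
  have hFnn : 0 ≤ᵐ[μ] F := by
    filter_upwards [haepos] with x hx
    exact mul_nonneg (abs_nonneg _) (Real.rpow_nonneg hx.le _)
  have hGnn : 0 ≤ᵐ[μ] G := by
    filter_upwards [haepos] with x hx
    exact Real.rpow_nonneg hx.le _
  have hFmem : MemLp F (ENNReal.ofReal p) μ := by
    refine memLp_of_integrable_rpow hp0 hmF hFnn (hint.congr ?_)
    exact hFp.symm
  have hGmem : MemLp G (ENNReal.ofReal q) μ := by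
    refine memLp_of_integrable_rpow hq0 hmG hGnn ?_
    refine (Integrable.congr ?_ hGq.symm)
    have : IntegrableOn (fun x : ℝ => x ^ (-(β/(p-1)))) (Icc t s) :=
      (ContinuousOn.integrableOn_Icc (by
        intro x hx
        exact (Real.continuousAt_rpow_const x _ (Or.inl (ht.trans_le hx.1).ne')).continuousWithinAt))
    exact this.mono_set Ioc_subset_Icc_self
  have H := MeasureTheory.integral_mul_le_Lp_mul_Lq_of_nonneg hpq hFnn hGnn hFmem hGmem
  calc ∫ x in Ioc t s, |u' x| = ∫ x, F x * G x ∂μ := (integral_congr_ae hFG).symm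
    _ ≤ (∫ x, F x ^ p ∂μ) ^ (1/p) * (∫ x, G x ^ q ∂μ) ^ (1/q) := H
    _ = _ := by rw [integral_congr_ae hFp, integral_congr_ae hGq]

/-- for `β > p-1`, every `u ∈ W^{1,p}(ℝ₊,t^β)` satisfies `lim_{t→∞} u(t) = 0`
and moreover `lim_{t→∞} t^{(β-(p-1))/p} u(t) = 0`. -/
theorem stmt11 (p β : ℝ) (hp : 1 < p) (hβ : p - 1 < β)
    (u u' : ℝ → ℝ) (hu : MemW p β u u') :
    Tendsto u atTop (𝓝 0) ∧
    Tendsto (fun t => t ^ ((β - (p - 1)) / p) * u t) atTop (𝓝 0) := by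
  obtain ⟨hcont, hu'int, hftc, huint, hu'pint⟩ := hu
  have hp0 : (0:ℝ) < p := lt_trans zero_lt_one hp
  have hp1 : (0:ℝ) < p - 1 := by linarith
  have hβ0 : (0:ℝ) < β := lt_trans hp1 hβ
  set q : ℝ := p / (p - 1) with hq
  have hq0 : (0:ℝ) < q := div_pos hp0 hp1
  set r : ℝ := -(β/(p-1)) with hrdef
  have hr : r < -1 := by
    rw [hrdef, neg_lt, neg_neg]
    exact (one_lt_div hp1).2 hβ
  have hr1 : r + 1 < 0 := by linarith
  set δ : ℝ := (β - (p - 1)) / p with hδdef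
  have hδ : 0 < δ := div_pos (by linarith) hp0
  set A : ℝ → ℝ := fun t => ∫ x in Ioi t, |u' x| ^ p * x ^ β with hA
  -- nonnegativity of the integrand a.e. on Ioi t for t ≥ 0
  have hnn : ∀ t : ℝ, 0 ≤ t → 0 ≤ᵐ[volume.restrict (Ioi t)] (fun x => |u' x| ^ p * x ^ β) := by
    intro t ht
    filter_upwards [ae_restrict_mem measurableSet_Ioi] with x hx
    exact mul_nonneg (Real.rpow_nonneg (abs_nonneg _) _)
      (Real.rpow_nonneg (le_trans ht (le_of_lt hx)) _)
  have hAint : ∀ t : ℝ, 0 < t → IntegrableOn (fun x => |u' x| ^ p * x ^ β) (Ioi t) :=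
    fun t ht => hu'pint.mono_set (Ioi_subset_Ioi ht.le)
  have hAnn : ∀ t : ℝ, 0 < t → 0 ≤ A t := by
    intro t ht
    exact setIntegral_nonneg measurableSet_Ioi (fun x hx =>
      mul_nonneg (Real.rpow_nonneg (abs_nonneg _) _)
        (Real.rpow_nonneg (le_of_lt (ht.trans hx)) _))
  -- A tends to 0 at infinity
  have hAtend : Tendsto A atTop (𝓝 0) := by
    have hanti : Antitone (fun t : ℝ => Ioi t) := fun i j hij => Ioi_subset_Ioi hij
    have h := tendsto_setIntegral_of_antitone (μ := volume)
      (f := fun x => |u' x| ^ p * x ^ β) (s := fun t : ℝ => Ioi t)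
      (fun i => measurableSet_Ioi) hanti ⟨1, hAint 1 one_pos⟩
    have hempty : (⋂ (t : ℝ), Ioi t) = (∅ : Set ℝ) := by
      ext x
      simp only [mem_iInter, mem_Ioi, mem_empty_iff_false, iff_false, not_forall, not_lt]
      exact ⟨x, le_refl x⟩
    rw [hempty] at h
    simpa using h
  -- we can find points where |u| is small
  have hsmall : ∀ ε : ℝ, 0 < ε → ∀ T : ℝ, ∃ s, T < s ∧ |u s| < ε := by
    intro ε hε T
    by_contra hcon
    push_neg at hcon
    set c : ℝ := max T 1 with hc
    have hc1 : (1:ℝ) ≤ c := le_max_right T 1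
    have hint : IntegrableOn (fun x => |u x| ^ p * x ^ β) (Ioi c) :=
      huint.mono_set (Ioi_subset_Ioi (by linarith))
    have hconst : IntegrableOn (fun _ : ℝ => ε ^ p) (Ioi c) := by
      refine Integrable.mono' hint aestronglyMeasurable_const ?_
      filter_upwards [ae_restrict_mem measurableSet_Ioi] with x hx
      have hx1 : (1:ℝ) ≤ x := le_of_lt (lt_of_le_of_lt hc1 hx)
      have h1 : ε ^ p ≤ |u x| ^ p :=
        Real.rpow_le_rpow hε.le (hcon x (lt_of_le_of_lt (le_max_left T 1) hx)) hp0.le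
      have h2 : (1:ℝ) ≤ x ^ β := by
        rw [← Real.one_rpow β]
        exact Real.rpow_le_rpow zero_le_one hx1 hβ0.le
      calc ‖ε ^ p‖ = ε ^ p := Real.norm_of_nonneg (Real.rpow_nonneg hε.le _)
        _ = ε ^ p * 1 := (mul_one _).symm
        _ ≤ |u x| ^ p * x ^ β :=
            mul_le_mul h1 h2 zero_le_one (Real.rpow_nonneg (abs_nonneg _) _)
    rw [integrableOn_const_iff] at hconst
    rcases hconst with h' | h'
    · exact absurd (enorm_eq_zero.mp h') (ne_of_gt (Real.rpow_pos_of_pos hε p))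
    · rw [Real.volume_Ioi] at h'
      exact (lt_irrefl _ h')
  -- the key pointwise bound
  have key : ∀ t : ℝ, 0 < t → |u t| ≤ A t ^ (1/p) * (-t ^ (r+1) / (r+1)) ^ (1/q) := by
    intro t ht
    refine le_of_forall_pos_le_add ?_
    intro ε hε
    obtain ⟨s, hts, hus⟩ := hsmall ε hε t
    have hIu' := hu'int t s ht hts
    have hIupb : IntegrableOn (fun x => |u' x| ^ p * x ^ β) (Ioc t s) :=
      hu'pint.mono_set (fun x hx => ht.trans hx.1)
    have h1 : |u t| ≤ |u s| + |∫ x in t..s, u' x| := by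
      have := hftc t s ht hts
      calc |u t| = |u s - (u s - u t)| := by ring_nf
        _ ≤ |u s| + |u s - u t| := abs_sub _ _
        _ = |u s| + |∫ x in t..s, u' x| := by rw [this]
    have h2 : |∫ x in t..s, u' x| ≤ ∫ x in Ioc t s, |u' x| := by
      rw [← intervalIntegral.integral_of_le hts.le]
      exact intervalIntegral.abs_integral_le_integral_abs hts.le
    have h3 := holder_Ioc hp ht hts hIu' hIupb
    -- bound the two factors
    have hf1 : (∫ x in Ioc t s, |u' x| ^ p * x ^ β) ≤ A t :=
      setIntegral_mono_set (hAint t ht) (hnn t ht.le)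
        (HasSubset.Subset.eventuallyLE Ioc_subset_Ioi_self)
    have hrint : IntegrableOn (fun x : ℝ => x ^ r) (Ioi t) :=
      integrableOn_Ioi_rpow_of_lt hr ht
    have hf2 : (∫ x in Ioc t s, x ^ r) ≤ ∫ x in Ioi t, x ^ r := by
      refine setIntegral_mono_set hrint ?_
        (HasSubset.Subset.eventuallyLE Ioc_subset_Ioi_self)
      filter_upwards [ae_restrict_mem measurableSet_Ioi] with x hx
      exact Real.rpow_nonneg (le_of_lt (ht.trans hx)) _
    have hval : (∫ x in Ioi t, x ^ r) = -t ^ (r+1) / (r+1) :=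
      integral_Ioi_rpow_of_lt hr ht
    have hintnn : 0 ≤ ∫ x in Ioc t s, |u' x| ^ p * x ^ β := by
      refine setIntegral_nonneg measurableSet_Ioc (fun x hx => ?_)
      exact mul_nonneg (Real.rpow_nonneg (abs_nonneg _) _)
        (Real.rpow_nonneg (le_of_lt (ht.trans hx.1)) _)
    have hrnn : 0 ≤ ∫ x in Ioc t s, x ^ r := by
      refine setIntegral_nonneg measurableSet_Ioc (fun x hx => ?_)
      exact Real.rpow_nonneg (le_of_lt (ht.trans hx.1)) _
    have h4 : (∫ x in Ioc t s, |u' x| ^ p * x ^ β) ^ (1/p) *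
        (∫ x in Ioc t s, x ^ r) ^ (1/q) ≤ A t ^ (1/p) * (-t ^ (r+1) / (r+1)) ^ (1/q) := by
      rw [← hval]
      have e1 := Real.rpow_le_rpow hintnn hf1 (by positivity : (0:ℝ) ≤ 1/p)
      have e2 := Real.rpow_le_rpow hrnn hf2 (by positivity : (0:ℝ) ≤ 1/q)
      exact mul_le_mul e1 e2 (Real.rpow_nonneg hrnn _) (Real.rpow_nonneg (hAnn t ht) _)
    calc |u t| ≤ |u s| + |∫ x in t..s, u' x| := h1
      _ ≤ ε + (∫ x in Ioc t s, |u' x|) := by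
          exact add_le_add hus.le h2
      _ ≤ ε + (∫ x in Ioc t s, |u' x| ^ p * x ^ β) ^ (1/p) * (∫ x in Ioc t s, x ^ r) ^ (1/q) := by
          exact add_le_add_right h3 ε
      _ ≤ ε + A t ^ (1/p) * (-t ^ (r+1) / (r+1)) ^ (1/q) := add_le_add_right h4 ε
      _ = A t ^ (1/p) * (-t ^ (r+1) / (r+1)) ^ (1/q) + ε := add_comm _ _
  -- the constant
  set K : ℝ := (-1 / (r+1)) ^ (1/q) with hK
  have hc0 : (0:ℝ) ≤ -1 / (r+1) := div_nonneg_of_nonpos (by norm_num) hr1.le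
  have hKnn : 0 ≤ K := Real.rpow_nonneg hc0 _
  -- identity: for t > 0 the bound simplifies
  have hid : ∀ t : ℝ, 0 < t →
      t ^ δ * (A t ^ (1/p) * (-t ^ (r+1) / (r+1)) ^ (1/q)) = A t ^ (1/p) * K := by
    intro t ht
    have h1 : -t ^ (r+1) / (r+1) = (-1/(r+1)) * t ^ (r+1) := by ring
    have h2 : ((-1/(r+1)) * t ^ (r+1)) ^ (1/q) = (-1/(r+1)) ^ (1/q) * (t ^ (r+1)) ^ (1/q) :=
      Real.mul_rpow hc0 (Real.rpow_nonneg ht.le _)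
    have h3 : (t ^ (r+1)) ^ (1/q) = t ^ (-δ) := by
      rw [← Real.rpow_mul ht.le]
      congr 1
      rw [hδdef, hrdef, hq]
      field_simp
      ring
    have h4 : t ^ δ * t ^ (-δ) = 1 := by
      rw [← Real.rpow_add ht]
      simp
    rw [h1, h2, h3, ← hK]
    calc t ^ δ * (A t ^ (1/p) * (K * t ^ (-δ)))
        = A t ^ (1/p) * K * (t ^ δ * t ^ (-δ)) := by ring
      _ = A t ^ (1/p) * K := by rw [h4, mul_one]
  -- second limit
  have claim2 : Tendsto (fun t => t ^ δ * u t) atTop (𝓝 0) := by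
    have hg : Tendsto (fun t => A t ^ (1/p) * K) atTop (𝓝 0) := by
      have h0 : Tendsto (fun t => A t ^ (1/p)) atTop (𝓝 (0 ^ (1/p))) :=
        hAtend.rpow_const (Or.inr (by positivity))
      rw [Real.zero_rpow (by positivity)] at h0
      simpa using h0.mul_const K
    refine squeeze_zero_norm' ?_ hg
    filter_upwards [eventually_gt_atTop 0] with t ht
    have hb := key t ht
    have htp : 0 ≤ t ^ δ := Real.rpow_nonneg ht.le _
    calc ‖t ^ δ * u t‖ = t ^ δ * |u t| := by
          rw [Real.norm_eq_abs, abs_mul, abs_of_nonneg htp]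
      _ ≤ t ^ δ * (A t ^ (1/p) * (-t ^ (r+1) / (r+1)) ^ (1/q)) :=
          mul_le_mul_of_nonneg_left hb htp
      _ = A t ^ (1/p) * K := hid t ht
  refine ⟨?_, claim2⟩
  have hneg : Tendsto (fun t : ℝ => t ^ (-δ)) atTop (𝓝 0) := tendsto_rpow_neg_atTop hδ
  have := claim2.mul hneg
  rw [mul_zero] at this
  refine this.congr' ?_
  filter_upwards [eventually_gt_atTop 0] with t ht
  have h4 : t ^ δ * t ^ (-δ) = 1 := by
    rw [← Real.rpow_add ht]; simp
  calc t ^ δ * u t * t ^ (-δ) = u t * (t ^ δ * t ^ (-δ)) := by ring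
    _ = u t := by rw [h4, mul_one]
end

section
/- Let 1 < p < ∞ and β > p−1. Then every u ∈ W^{1,p}(ℝ₊,t^β) satisfies ∫_0^∞ |u(t)|^p t^{β−p} dt < ∞; that is, Y^{1,p}_{t^β} = W^{1,p}(ℝ₊,t^β). -/
open MeasureTheory Set Filter Topology

lemma aux_add_rpow {x y p : ℝ} (hx : 0 ≤ x) (hy : 0 ≤ y) (hp : 1 ≤ p) :
    (x + y) ^ p ≤ 2 ^ (p - 1) * (x ^ p + y ^ p) := by
  have h := NNReal.rpow_add_le_mul_rpow_add_rpow x.toNNReal y.toNNReal hp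
  have h2 := NNReal.coe_le_coe.mpr h
  push_cast at h2
  rwa [Real.coe_toNNReal x hx, Real.coe_toNNReal y hy] at h2

lemma aux_memLp {μ : Measure ℝ} {f : ℝ → ℝ} {p : ℝ} (hp : 0 < p)
    (hf : AEStronglyMeasurable f μ) (hnn : 0 ≤ᵐ[μ] f)
    (hi : Integrable (fun x => f x ^ p) μ) : MemLp f (ENNReal.ofReal p) μ := by
  have q0 : ENNReal.ofReal p ≠ 0 := by simp [ENNReal.ofReal_eq_zero, not_le, hp]
  have qt : ENNReal.ofReal p ≠ ⊤ := ENNReal.ofReal_ne_top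
  have h := (memLp_norm_rpow_iff (p := ENNReal.ofReal p) (q := ENNReal.ofReal p) hf q0 qt)
  rw [ENNReal.div_self q0 qt] at h
  apply h.mp
  rw [memLp_one_iff_integrable]
  refine hi.congr ?_
  filter_upwards [hnn] with x hx
  rw [ENNReal.toReal_ofReal hp.le, Real.norm_of_nonneg hx]

lemma aux_holder (p β : ℝ) (hp : 1 < p) {a b : ℝ} (ha : 0 < a) {v : ℝ → ℝ}
    (hv : IntegrableOn v (Ioc a b))
    (hvG : IntegrableOn (fun s => |v s| ^ p * s ^ β) (Ioc a b)) :
    ∫ s in Ioc a b, |v s| ≤ (∫ s in Ioc a b, |v s| ^ p * s ^ β) ^ (1/p) *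
      (∫ s in Ioc a b, s ^ (-(β/(p-1)))) ^ (1/(p/(p-1))) := by
  have hp0 : 0 < p := lt_trans one_pos hp
  have hp1 : 0 < p - 1 := sub_pos.2 hp
  have hpq : p.HolderConjugate (p/(p-1)) := Real.HolderConjugate.conjExponent hp
  set μ := volume.restrict (Ioc a b) with hμ
  have haes : ∀ᵐ s ∂μ, s ∈ Ioc a b := ae_restrict_mem measurableSet_Ioc
  set F : ℝ → ℝ := fun s => |v s| * s ^ (β/p) with hF
  set W : ℝ → ℝ := fun s => s ^ (-(β/p)) with hW
  have hWm : Measurable W := measurable_id.pow measurable_const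
  have hFm : AEStronglyMeasurable F μ := by
    have h1 : AEStronglyMeasurable (fun s => |v s|) μ := by
      simpa [Real.norm_eq_abs] using hv.aestronglyMeasurable.norm
    exact h1.mul (measurable_id.pow (measurable_const (a := β/p))).aestronglyMeasurable
  have hFp : ∀ s ∈ Ioc a b, F s ^ p = |v s| ^ p * s ^ β := by
    intro s hs
    have hs0 : 0 < s := ha.trans hs.1
    rw [hF, Real.mul_rpow (abs_nonneg _) (Real.rpow_nonneg hs0.le _),
      ← Real.rpow_mul hs0.le, div_mul_cancel₀ _ hp0.ne']
  have hWq : ∀ s ∈ Ioc a b, W s ^ (p/(p-1)) = s ^ (-(β/(p-1))) := by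
    intro s hs
    have hs0 : 0 < s := ha.trans hs.1
    rw [hW, ← Real.rpow_mul hs0.le]
    congr 1
    field_simp
  have hFW : ∀ s ∈ Ioc a b, F s * W s = |v s| := by
    intro s hs
    have hs0 : 0 < s := ha.trans hs.1
    rw [hF, hW, mul_assoc, ← Real.rpow_add hs0, add_neg_cancel, Real.rpow_zero, mul_one]
  have hFnn : 0 ≤ᵐ[μ] F := by
    filter_upwards [haes] with s hs
    exact mul_nonneg (abs_nonneg _) (Real.rpow_nonneg (ha.trans hs.1).le _)
  have hWnn : 0 ≤ᵐ[μ] W := by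
    filter_upwards [haes] with s hs
    exact Real.rpow_nonneg (ha.trans hs.1).le _
  have hFLp : MemLp F (ENNReal.ofReal p) μ := by
    refine aux_memLp hp0 hFm hFnn (hvG.congr ?_)
    filter_upwards [haes] with s hs
    exact (hFp s hs).symm
  have hWint : IntegrableOn (fun s => s ^ (-(β/(p-1)))) (Ioc a b) := by
    refine (ContinuousOn.integrableOn_Icc ?_).mono_set Ioc_subset_Icc_self
    refine ContinuousOn.rpow_const continuousOn_id fun x hx => Or.inl ?_
    exact ne_of_gt (lt_of_lt_of_le ha hx.1)
  have hWLp : MemLp W (ENNReal.ofReal (p/(p-1))) μ := by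
    refine aux_memLp hpq.symm.pos hWm.aestronglyMeasurable hWnn (hWint.congr ?_)
    filter_upwards [haes] with s hs
    exact (hWq s hs).symm
  have H := MeasureTheory.integral_mul_le_Lp_mul_Lq_of_nonneg hpq hFnn hWnn hFLp hWLp
  rw [setIntegral_congr_fun measurableSet_Ioc hFW] at H
  rw [setIntegral_congr_fun (f := fun s => F s ^ p) measurableSet_Ioc hFp] at H
  rw [setIntegral_congr_fun (f := fun s => W s ^ (p/(p-1))) measurableSet_Ioc hWq] at H
  exact H

lemma core_bound (p β : ℝ) (hp : 1 < p) (hβ : p - 1 < β) (u u' : ℝ → ℝ)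
    (hcont : ContinuousOn u (Ioi 0))
    (hu'i : ∀ a b : ℝ, 0 < a → a < b → IntegrableOn u' (Ioc a b))
    (hftc : ∀ a b : ℝ, 0 < a → a < b → u b - u a = ∫ t in a..b, u' t)
    (hIu : IntegrableOn (fun t => |u t| ^ p * t ^ β) (Ioi 0))
    (hIu' : IntegrableOn (fun t => |u' t| ^ p * t ^ β) (Ioi 0)) :
    ∃ C : ℝ, 0 ≤ C ∧ ∀ δ : ℝ, 0 < δ → δ ≤ 1 →
      ∫ t in Ioc δ 1, |u t| ^ p * t ^ (β - p) ≤ C := by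
  have hp0 : 0 < p := lt_trans one_pos hp
  have hp1 : 0 < p - 1 := sub_pos.2 hp
  have he : 0 < β + 1 - p := by linarith
  have hβ' : 1 < β / (p-1) := (one_lt_div hp1).2 (by linarith)
  set c₁ : ℝ := (β/(p-1) - 1)⁻¹ with hc₁d
  have hc₁ : 0 < c₁ := inv_pos.2 (by linarith)
  set l : ℝ := max 2 (2 ^ (p/(β+1-p))) with hld
  have hl2 : (2:ℝ) ≤ l := le_max_left _ _
  have hl1 : (1:ℝ) < l := lt_of_lt_of_le one_lt_two hl2
  have hl0 : (0:ℝ) < l := lt_trans one_pos hl1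
  have hθ : 2 ^ (p-1) * l ^ (p-1-β) ≤ 1/2 := by
    have h2 : (2:ℝ) ^ (p/(β+1-p)) ≤ l := le_max_right _ _
    have h3 : (2:ℝ) ^ p ≤ l ^ (β+1-p) := by
      calc (2:ℝ) ^ p = ((2:ℝ) ^ (p/(β+1-p))) ^ (β+1-p) := by
            rw [← Real.rpow_mul (by norm_num), div_mul_cancel₀ _ he.ne']
      _ ≤ l ^ (β+1-p) := Real.rpow_le_rpow (Real.rpow_nonneg (by norm_num) _) h2 he.le
    have h4 : l ^ (p-1-β) ≤ ((2:ℝ) ^ p)⁻¹ := by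
      rw [show p-1-β = -(β+1-p) by ring, Real.rpow_neg hl0.le]
      exact inv_anti₀ (Real.rpow_pos_of_pos two_pos _) h3
    calc 2 ^ (p-1) * l ^ (p-1-β) ≤ 2 ^ (p-1) * ((2:ℝ) ^ p)⁻¹ :=
          mul_le_mul_of_nonneg_left h4 (Real.rpow_nonneg (by norm_num) _)
    _ = 1/2 := by
        rw [← Real.rpow_neg (by norm_num : (0:ℝ) ≤ 2), ← Real.rpow_add two_pos,
          show p - 1 + -p = -1 by ring, Real.rpow_neg_one]
        norm_num
  -- basic nonnegativity facts
  have hGnn : ∀ s : ℝ, 0 < s → 0 ≤ |u' s| ^ p * s ^ β := fun s hs =>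
    mul_nonneg (Real.rpow_nonneg (abs_nonneg _) _) (Real.rpow_nonneg hs.le _)
  have hunn : ∀ t : ℝ, 0 < t → 0 ≤ |u t| ^ p * t ^ β := fun t ht =>
    mul_nonneg (Real.rpow_nonneg (abs_nonneg _) _) (Real.rpow_nonneg ht.le _)
  have hfnn : ∀ t : ℝ, 0 < t → 0 ≤ |u t| ^ p * t ^ (β - p) := fun t ht =>
    mul_nonneg (Real.rpow_nonneg (abs_nonneg _) _) (Real.rpow_nonneg ht.le _)
  have hGnnae : 0 ≤ᵐ[volume.restrict (Ioi (0:ℝ))] (fun s => |u' s| ^ p * s ^ β) := by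
    filter_upwards [ae_restrict_mem measurableSet_Ioi] with s hs
    exact hGnn s hs
  have huae : 0 ≤ᵐ[volume.restrict (Ioi (0:ℝ))] (fun t => |u t| ^ p * t ^ β) := by
    filter_upwards [ae_restrict_mem measurableSet_Ioi] with t ht
    exact hunn t ht
  have hB'0 : 0 ≤ ∫ s in Ioi (0:ℝ), |u' s| ^ p * s ^ β :=
    setIntegral_nonneg measurableSet_Ioi fun s hs => hGnn s hs
  have hBu0 : 0 ≤ ∫ t in Ioi (0:ℝ), |u t| ^ p * t ^ β :=
    setIntegral_nonneg measurableSet_Ioi fun t ht => hunn t ht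
  have hlog : 0 ≤ Real.log l := Real.log_nonneg hl1.le
  have h2p : (0:ℝ) < 2 ^ (p-1) := Real.rpow_pos_of_pos two_pos _
  have hc₁p : (0:ℝ) ≤ c₁ ^ (p-1) := Real.rpow_nonneg hc₁.le _
  refine ⟨(∫ t in Ioi (0:ℝ), |u t| ^ p * t ^ β) +
      2 * (2^(p-1) * c₁^(p-1) * (Real.log l * ∫ s in Ioi (0:ℝ), |u' s| ^ p * s ^ β)), ?_, ?_⟩
  · have h9 : 0 ≤ 2^(p-1) * c₁^(p-1) * (Real.log l * ∫ s in Ioi (0:ℝ), |u' s| ^ p * s ^ β) :=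
      mul_nonneg (mul_nonneg h2p.le hc₁p) (mul_nonneg hlog hB'0)
    linarith
  intro δ hδ0 hδ1
  have hδl : δ ≤ l := le_trans hδ1 hl1.le
  -- continuity and integrability of the target integrand
  have hfc : ContinuousOn (fun t : ℝ => |u t| ^ p * t ^ (β - p)) (Ioi 0) :=
    (hcont.abs.rpow_const fun x _ => Or.inr hp0.le).mul
      (continuousOn_id.rpow_const fun x hx => Or.inl (ne_of_gt hx))
  have hIcc : ∀ a b : ℝ, 0 < a → IntegrableOn (fun t => |u t| ^ p * t ^ (β - p)) (Icc a b) :=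
    fun a b ha => (hfc.mono fun x hx => lt_of_lt_of_le ha hx.1).integrableOn_Icc
  have hIf : ∀ a b : ℝ, 0 < a → IntegrableOn (fun t => |u t| ^ p * t ^ (β - p)) (Ioc a b) :=
    fun a b ha => (hIcc a b ha).mono_set Ioc_subset_Icc_self
  -- the primitive Φ of the derivative term
  set Φ : ℝ → ℝ := fun x => ∫ s in Ioc δ x, |u' s| ^ p * s ^ β with hΦd
  have hGsub : ∀ x : ℝ, Ioc δ x ⊆ Ioi 0 := fun x s hs => lt_trans hδ0 hs.1
  have hGint : ∀ x : ℝ, IntegrableOn (fun s => |u' s| ^ p * s ^ β) (Ioc δ x) :=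
    fun x => hIu'.mono_set (hGsub x)
  have hΦmono : Monotone Φ := by
    intro x y hxy
    refine setIntegral_mono_set (hGint y) ?_ (Ioc_subset_Ioc_right hxy).eventuallyLE
    filter_upwards [ae_restrict_mem measurableSet_Ioc] with s hs
    exact hGnn s (lt_trans hδ0 hs.1)
  have hΦmeas : Measurable Φ := hΦmono.measurable
  have hΦnn : ∀ x, 0 ≤ Φ x := fun x =>
    setIntegral_nonneg measurableSet_Ioc fun s hs => hGnn s (lt_trans hδ0 hs.1)
  have hΦB : ∀ x, Φ x ≤ ∫ s in Ioi (0:ℝ), |u' s| ^ p * s ^ β := fun x =>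
    setIntegral_mono_set hIu' hGnnae (hGsub x).eventuallyLE
  -- pointwise estimate
  have hpt : ∀ t ∈ Ioc δ 1, |u t| ^ p * t ^ (β - p) ≤
      2^(p-1) * l^(p-β) * (|u (l*t)| ^ p * (l*t) ^ (β-p))
      + 2^(p-1) * c₁^(p-1) * ((Φ (l*t) - Φ t) * t⁻¹) := by
    intro t ht
    have ht0 : 0 < t := lt_trans hδ0 ht.1
    have htl : t < l * t := (lt_mul_iff_one_lt_left ht0).2 hl1
    have hsub2 : Ioc t (l*t) ⊆ Ioi 0 := fun s hs => lt_trans ht0 hs.1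
    have hGint2 : IntegrableOn (fun s => |u' s| ^ p * s ^ β) (Ioc t (l*t)) := hIu'.mono_set hsub2
    have hA : Φ (l*t) - Φ t = ∫ s in Ioc t (l*t), |u' s| ^ p * s ^ β := by
      have hun : Ioc δ t ∪ Ioc t (l*t) = Ioc δ (l*t) := Ioc_union_Ioc_eq_Ioc ht.1.le htl.le
      have h := setIntegral_union (μ := volume) (f := fun s => |u' s| ^ p * s ^ β)
        (Ioc_disjoint_Ioc_of_le le_rfl) measurableSet_Ioc (hGint t) hGint2
      rw [hun] at h
      simp only [hΦd]
      rw [h]; ring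
    have hKle := aux_holder p β hp ht0 (hu'i t (l*t) ht0 htl) hGint2
    have hKnn : 0 ≤ ∫ s in Ioc t (l*t), |u' s| :=
      setIntegral_nonneg measurableSet_Ioc fun s _ => abs_nonneg _
    have hAnn : 0 ≤ ∫ s in Ioc t (l*t), |u' s| ^ p * s ^ β :=
      setIntegral_nonneg measurableSet_Ioc fun s hs => hGnn s (lt_trans ht0 hs.1)
    have hWnn : 0 ≤ ∫ s in Ioc t (l*t), s ^ (-(β/(p-1))) :=
      setIntegral_nonneg measurableSet_Ioc fun s hs => Real.rpow_nonneg (lt_trans ht0 hs.1).le _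
    have hβlt : -(β/(p-1)) < -1 := by
      rw [neg_lt_neg_iff]; exact hβ'
    have hWle : ∫ s in Ioc t (l*t), s ^ (-(β/(p-1))) ≤ c₁ * t ^ (1 - β/(p-1)) := by
      have hWIoi : IntegrableOn (fun s : ℝ => s ^ (-(β/(p-1)))) (Ioi t) :=
        integrableOn_Ioi_rpow_of_lt hβlt ht0
      have h1 : ∫ s in Ioc t (l*t), s ^ (-(β/(p-1))) ≤ ∫ s in Ioi t, s ^ (-(β/(p-1))) := by
        refine setIntegral_mono_set hWIoi ?_ Ioc_subset_Ioi_self.eventuallyLE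
        filter_upwards [ae_restrict_mem measurableSet_Ioi] with s hs
        exact Real.rpow_nonneg (lt_trans ht0 hs).le _
      have h2 : ∫ s in Ioi t, s ^ (-(β/(p-1))) = -t ^ (-(β/(p-1)) + 1) / (-(β/(p-1)) + 1) :=
        integral_Ioi_rpow_of_lt hβlt ht0
      have h3 : -t ^ (-(β/(p-1)) + 1) / (-(β/(p-1)) + 1) = c₁ * t ^ (1 - β/(p-1)) := by
        rw [show -(β/(p-1)) + 1 = 1 - β/(p-1) by ring, hc₁d]
        have hne : 1 - β/(p-1) ≠ 0 := ne_of_lt (by linarith)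
        have hne2 : β/(p-1) - 1 ≠ 0 := ne_of_gt (by linarith)
        have key : ∀ X : ℝ, -X / (1 - β/(p-1)) = (β/(p-1) - 1)⁻¹ * X := by
          intro X
          rw [show β/(p-1) - 1 = -(1 - β/(p-1)) by ring, inv_neg, div_eq_mul_inv]
          ring
        exact key _
      exact h1.trans_eq (h2.trans h3)
    have hKp : (∫ s in Ioc t (l*t), |u' s|) ^ p ≤
        (∫ s in Ioc t (l*t), |u' s| ^ p * s ^ β) * (c₁ * t ^ (1 - β/(p-1))) ^ (p-1) := by
      have h4 := Real.rpow_le_rpow hKnn hKle hp0.le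
      rw [Real.mul_rpow (Real.rpow_nonneg hAnn _) (Real.rpow_nonneg hWnn _),
        ← Real.rpow_mul hAnn, ← Real.rpow_mul hWnn,
        show 1/p * p = 1 from one_div_mul_cancel hp0.ne',
        show 1/(p/(p-1)) * p = p - 1 from by rw [one_div_div, div_mul_cancel₀ _ hp0.ne'],
        Real.rpow_one] at h4
      exact h4.trans (mul_le_mul_of_nonneg_left
        (Real.rpow_le_rpow hWnn hWle hp1.le) hAnn)
    have h5 : |u t| ≤ |u (l*t)| + ∫ s in Ioc t (l*t), |u' s| := by
      have hftc' := hftc t (l*t) ht0 htl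
      have h6 : |u (l*t) - u t| ≤ ∫ s in Ioc t (l*t), |u' s| := by
        rw [hftc']
        exact le_trans (intervalIntegral.abs_integral_le_integral_abs htl.le)
          (le_of_eq (intervalIntegral.integral_of_le htl.le))
      have h7 := abs_sub_abs_le_abs_sub (u t) (u (l*t))
      rw [abs_sub_comm] at h7
      linarith
    have h8 : |u t| ^ p ≤ 2^(p-1) * (|u (l*t)| ^ p + (∫ s in Ioc t (l*t), |u' s|) ^ p) :=
      le_trans (Real.rpow_le_rpow (abs_nonneg _) h5 hp0.le)
        (aux_add_rpow (abs_nonneg _) hKnn hp.le)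
    have e1 : 2^(p-1) * l^(p-β) * (|u (l*t)| ^ p * (l*t) ^ (β-p)) =
        2^(p-1) * (|u (l*t)| ^ p * t ^ (β-p)) := by
      rw [Real.mul_rpow hl0.le ht0.le, show p - β = -(β-p) by ring, Real.rpow_neg hl0.le]
      have hlp : l ^ (β-p) ≠ 0 := (Real.rpow_pos_of_pos hl0 _).ne'
      field_simp
    have e2 : (c₁ * t ^ (1 - β/(p-1))) ^ (p-1) * t ^ (β-p) = c₁^(p-1) * t⁻¹ := by
      rw [Real.mul_rpow hc₁.le (Real.rpow_nonneg ht0.le _), ← Real.rpow_mul ht0.le, mul_assoc,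
        ← Real.rpow_add ht0, show (1 - β/(p-1)) * (p-1) + (β-p) = -1 from by
          field_simp; ring, Real.rpow_neg_one]
    calc |u t| ^ p * t ^ (β-p)
        ≤ (2^(p-1) * (|u (l*t)| ^ p + (∫ s in Ioc t (l*t), |u' s|) ^ p)) * t ^ (β-p) :=
          mul_le_mul_of_nonneg_right h8 (Real.rpow_nonneg ht0.le _)
      _ = 2^(p-1) * (|u (l*t)| ^ p * t ^ (β-p))
          + 2^(p-1) * ((∫ s in Ioc t (l*t), |u' s|) ^ p * t ^ (β-p)) := by ring
      _ ≤ 2^(p-1) * (|u (l*t)| ^ p * t ^ (β-p))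
          + 2^(p-1) * ((∫ s in Ioc t (l*t), |u' s| ^ p * s ^ β)
              * (c₁ * t ^ (1 - β/(p-1))) ^ (p-1) * t ^ (β-p)) := by
          have h10 := mul_le_mul_of_nonneg_right hKp (Real.rpow_nonneg ht0.le (β-p))
          have h11 := mul_le_mul_of_nonneg_left h10 h2p.le
          exact add_le_add le_rfl h11
      _ = 2^(p-1) * l^(p-β) * (|u (l*t)| ^ p * (l*t) ^ (β-p))
          + 2^(p-1) * c₁^(p-1) * ((Φ (l*t) - Φ t) * t⁻¹) := by
          rw [e1, hA, mul_assoc (∫ s in Ioc t (l*t), |u' s| ^ p * s ^ β)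
            ((c₁ * t ^ (1 - β/(p-1))) ^ (p-1)) (t ^ (β-p)), e2]
          ring
  -- integrability of the three integrands on (δ,1]
  have hIf1 : IntegrableOn (fun t => |u t| ^ p * t ^ (β - p)) (Ioc δ 1) := hIf δ 1 hδ0
  have hIg1 : IntegrableOn (fun t => |u (l*t)| ^ p * (l*t) ^ (β-p)) (Ioc δ 1) := by
    have hcomp : ContinuousOn (fun t : ℝ => |u (l*t)| ^ p * (l*t) ^ (β-p)) (Icc δ 1) := by
      have := hfc.comp (continuous_mul_left l).continuousOn
        (fun x (hx : x ∈ Icc δ 1) => (mul_pos hl0 (lt_of_lt_of_le hδ0 hx.1) : (0:ℝ) < l * x))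
      exact this
    exact hcomp.integrableOn_Icc.mono_set Ioc_subset_Icc_self
  have hIh : IntegrableOn (fun x => Φ x * x⁻¹) (Ioc δ l) := by
    refine Integrable.mono'
      (g := fun _ => (∫ s in Ioi (0:ℝ), |u' s| ^ p * s ^ β) * δ⁻¹)
      (integrableOn_const measure_Ioc_lt_top.ne)
      ((hΦmeas.mul measurable_inv).aestronglyMeasurable) ?_
    filter_upwards [ae_restrict_mem measurableSet_Ioc] with x hx
    have hx0 : 0 < x := lt_trans hδ0 hx.1
    rw [Real.norm_eq_abs, abs_mul, abs_of_nonneg (hΦnn x), abs_of_nonneg (inv_nonneg.2 hx0.le)]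
    exact mul_le_mul (hΦB x) (inv_anti₀ hδ0 hx.1.le) (inv_nonneg.2 hx0.le) hB'0
  have hIha : IntegrableOn (fun t => Φ (l*t) * t⁻¹) (Ioc δ 1) := by
    refine Integrable.mono'
      (g := fun _ => (∫ s in Ioi (0:ℝ), |u' s| ^ p * s ^ β) * δ⁻¹)
      (integrableOn_const measure_Ioc_lt_top.ne)
      (((hΦmeas.comp (measurable_const_mul l)).mul measurable_inv).aestronglyMeasurable) ?_
    filter_upwards [ae_restrict_mem measurableSet_Ioc] with x hx
    have hx0 : 0 < x := lt_trans hδ0 hx.1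
    rw [Real.norm_eq_abs, abs_mul, abs_of_nonneg (hΦnn (l*x)), abs_of_nonneg (inv_nonneg.2 hx0.le)]
    exact mul_le_mul (hΦB (l*x)) (inv_anti₀ hδ0 hx.1.le) (inv_nonneg.2 hx0.le) hB'0
  have hIhb : IntegrableOn (fun t => Φ t * t⁻¹) (Ioc δ 1) := hIh.mono_set (Ioc_subset_Ioc_right hl1.le)
  have hIg2 : IntegrableOn (fun t => (Φ (l*t) - Φ t) * t⁻¹) (Ioc δ 1) := by
    have he' : (fun t : ℝ => (Φ (l*t) - Φ t) * t⁻¹) = fun t => Φ (l*t) * t⁻¹ - Φ t * t⁻¹ := by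
      funext t; ring
    rw [he']
    exact hIha.sub hIhb
  -- integrate the pointwise bound
  have step := setIntegral_mono_on hIf1
    ((hIg1.const_mul (2^(p-1) * l^(p-β))).add (hIg2.const_mul (2^(p-1) * c₁^(p-1))))
    measurableSet_Ioc hpt
  simp only [Pi.add_apply] at step
  rw [integral_add (hIg1.const_mul (2^(p-1) * l^(p-β))) (hIg2.const_mul (2^(p-1) * c₁^(p-1))),
    integral_const_mul, integral_const_mul] at step
  -- bound the scaled term
  have hIIδl : IntervalIntegrable (fun t => |u t| ^ p * t ^ (β - p)) volume δ l :=
    (by rw [uIcc_of_le hδl]; exact hIcc δ l hδ0 :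
      IntegrableOn (fun t => |u t| ^ p * t ^ (β - p)) (uIcc δ l) volume).intervalIntegrable
  have hIIδ1 : IntervalIntegrable (fun t => |u t| ^ p * t ^ (β - p)) volume δ 1 :=
    (by rw [uIcc_of_le hδ1]; exact hIcc δ 1 hδ0 :
      IntegrableOn (fun t => |u t| ^ p * t ^ (β - p)) (uIcc δ 1) volume).intervalIntegrable
  have hII1l : IntervalIntegrable (fun t => |u t| ^ p * t ^ (β - p)) volume 1 l :=
    (by rw [uIcc_of_le hl1.le]; exact hIcc 1 l one_pos :
      IntegrableOn (fun t => |u t| ^ p * t ^ (β - p)) (uIcc 1 l) volume).intervalIntegrable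
  have hg1le : ∫ t in Ioc δ 1, |u (l*t)| ^ p * (l*t) ^ (β-p) ≤
      l⁻¹ * ((∫ t in Ioc δ 1, |u t| ^ p * t ^ (β - p)) + ∫ t in Ioi (0:ℝ), |u t| ^ p * t ^ β) := by
    have e : ∫ t in Ioc δ 1, |u (l*t)| ^ p * (l*t) ^ (β-p) =
        l⁻¹ * ∫ x in (l*δ)..(l*1), |u x| ^ p * x ^ (β-p) := by
      rw [← intervalIntegral.integral_of_le hδ1,
        intervalIntegral.integral_comp_mul_left (fun x => |u x| ^ p * x ^ (β-p)) hl0.ne',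
        smul_eq_mul]
    rw [e]
    have h1 : ∫ x in (l*δ)..(l*1), |u x| ^ p * x ^ (β-p) ≤
        ∫ x in δ..l, |u x| ^ p * x ^ (β-p) := by
      rw [mul_one]
      refine intervalIntegral.integral_mono_interval (le_mul_of_one_le_left hδ0.le hl1.le)
        (by nlinarith) le_rfl ?_ hIIδl
      filter_upwards [ae_restrict_mem measurableSet_Ioc] with x hx
      exact hfnn x (lt_trans hδ0 hx.1)
    have h2 : ∫ x in δ..l, |u x| ^ p * x ^ (β-p) =
        (∫ t in Ioc δ 1, |u t| ^ p * t ^ (β - p)) + ∫ x in (1:ℝ)..l, |u x| ^ p * x ^ (β-p) := by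
      rw [← intervalIntegral.integral_add_adjacent_intervals hIIδ1 hII1l,
        intervalIntegral.integral_of_le hδ1]
    have h3 : ∫ x in (1:ℝ)..l, |u x| ^ p * x ^ (β-p) ≤ ∫ t in Ioi (0:ℝ), |u t| ^ p * t ^ β := by
      rw [intervalIntegral.integral_of_le hl1.le]
      have h4 : ∫ x in Ioc 1 l, |u x| ^ p * x ^ (β-p) ≤ ∫ x in Ioc 1 l, |u x| ^ p * x ^ β :=
        setIntegral_mono_on (hIf 1 l one_pos)
          (hIu.mono_set fun x hx => lt_trans one_pos hx.1) measurableSet_Ioc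
          (fun x hx => mul_le_mul_of_nonneg_left
            (Real.rpow_le_rpow_of_exponent_le hx.1.le (by linarith))
            (Real.rpow_nonneg (abs_nonneg _) _))
      have h5 : ∫ x in Ioc 1 l, |u x| ^ p * x ^ β ≤ ∫ t in Ioi (0:ℝ), |u t| ^ p * t ^ β :=
        setIntegral_mono_set hIu huae
          (show Ioc (1:ℝ) l ⊆ Ioi 0 from fun x hx => lt_trans one_pos hx.1).eventuallyLE
      linarith
    refine mul_le_mul_of_nonneg_left ?_ (inv_nonneg.2 hl0.le)
    calc ∫ x in (l*δ)..(l*1), |u x| ^ p * x ^ (β-p) ≤ ∫ x in δ..l, |u x| ^ p * x ^ (β-p) := h1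
      _ = (∫ t in Ioc δ 1, |u t| ^ p * t ^ (β - p)) + ∫ x in (1:ℝ)..l, |u x| ^ p * x ^ (β-p) := h2
      _ ≤ _ := add_le_add le_rfl h3
  -- bound the Φ term
  have hg2le : ∫ t in Ioc δ 1, (Φ (l*t) - Φ t) * t⁻¹ ≤
      Real.log l * ∫ s in Ioi (0:ℝ), |u' s| ^ p * s ^ β := by
    have esub : ∫ t in Ioc δ 1, (Φ (l*t) - Φ t) * t⁻¹ =
        (∫ t in Ioc δ 1, Φ (l*t) * t⁻¹) - ∫ t in Ioc δ 1, Φ t * t⁻¹ := by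
      rw [← integral_sub hIha hIhb]
      refine integral_congr_ae (Eventually.of_forall fun t => ?_)
      ring
    have ea : ∫ t in Ioc δ 1, Φ (l*t) * t⁻¹ = ∫ x in Ioc (l*δ) (l*1), Φ x * x⁻¹ := by
      have e0 : EqOn (fun t => Φ (l*t) * t⁻¹) (fun t => l * (Φ (l*t) * (l*t)⁻¹)) (Ioc δ 1) := by
        intro t ht
        have ht0 : 0 < t := lt_trans hδ0 ht.1
        show Φ (l*t) * t⁻¹ = l * (Φ (l*t) * (l*t)⁻¹)
        rw [mul_inv, show l * (Φ (l*t) * (l⁻¹ * t⁻¹)) = (l * l⁻¹) * (Φ (l*t) * t⁻¹) by ring,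
          mul_inv_cancel₀ hl0.ne', one_mul]
      rw [setIntegral_congr_fun measurableSet_Ioc e0, ← intervalIntegral.integral_of_le hδ1,
        intervalIntegral.integral_const_mul,
        intervalIntegral.integral_comp_mul_left (fun x => Φ x * x⁻¹) hl0.ne',
        smul_eq_mul, ← mul_assoc, mul_inv_cancel₀ hl0.ne', one_mul,
        intervalIntegral.integral_of_le (by nlinarith : l*δ ≤ l*1)]
    have hb1 : ∫ x in Ioc (l*δ) (l*1), Φ x * x⁻¹ ≤ ∫ x in Ioc δ l, Φ x * x⁻¹ := by
      rw [mul_one]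
      refine setIntegral_mono_set hIh ?_
        (Ioc_subset_Ioc_left (le_mul_of_one_le_left hδ0.le hl1.le)).eventuallyLE
      filter_upwards [ae_restrict_mem measurableSet_Ioc] with x hx
      exact mul_nonneg (hΦnn x) (inv_nonneg.2 (lt_trans hδ0 hx.1).le)
    have hsplit : ∫ x in Ioc δ l, Φ x * x⁻¹ =
        (∫ x in Ioc δ 1, Φ x * x⁻¹) + ∫ x in Ioc 1 l, Φ x * x⁻¹ := by
      rw [← Ioc_union_Ioc_eq_Ioc hδ1 hl1.le,
        setIntegral_union (Ioc_disjoint_Ioc_of_le le_rfl) measurableSet_Ioc hIhb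
          (hIh.mono_set (Ioc_subset_Ioc_left hδ1))]
    have hlast : ∫ x in Ioc 1 l, Φ x * x⁻¹ ≤
        Real.log l * ∫ s in Ioi (0:ℝ), |u' s| ^ p * s ^ β := by
      have h6 : ∫ x in Ioc 1 l, Φ x * x⁻¹ ≤
          ∫ x in Ioc 1 l, (∫ s in Ioi (0:ℝ), |u' s| ^ p * s ^ β) * x⁻¹ := by
        refine setIntegral_mono_on (hIh.mono_set (Ioc_subset_Ioc_left hδ1)) ?_
          measurableSet_Ioc ?_
        · refine Integrable.const_mul ?_ _
          refine (ContinuousOn.integrableOn_Icc ?_).mono_set Ioc_subset_Icc_self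
          exact ContinuousOn.inv₀ continuousOn_id
            (fun x hx => ne_of_gt (lt_of_lt_of_le one_pos hx.1))
        · intro x hx
          exact mul_le_mul_of_nonneg_right (hΦB x) (inv_nonneg.2 (lt_trans one_pos hx.1).le)
      have h7 : ∫ x in Ioc 1 l, (∫ s in Ioi (0:ℝ), |u' s| ^ p * s ^ β) * x⁻¹ =
          (∫ s in Ioi (0:ℝ), |u' s| ^ p * s ^ β) * Real.log l := by
        rw [integral_const_mul, ← intervalIntegral.integral_of_le hl1.le,
          _root_.integral_inv (by
            intro h
            rw [Set.uIcc_of_le hl1.le] at h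
            exact absurd h.1 (by norm_num)), div_one]
      calc ∫ x in Ioc 1 l, Φ x * x⁻¹
          ≤ ∫ x in Ioc 1 l, (∫ s in Ioi (0:ℝ), |u' s| ^ p * s ^ β) * x⁻¹ := h6
        _ = (∫ s in Ioi (0:ℝ), |u' s| ^ p * s ^ β) * Real.log l := h7
        _ = Real.log l * ∫ s in Ioi (0:ℝ), |u' s| ^ p * s ^ β := by ring
    linarith
  -- combine everything
  have hJnn : 0 ≤ ∫ t in Ioc δ 1, |u t| ^ p * t ^ (β - p) :=
    setIntegral_nonneg measurableSet_Ioc fun t ht => hfnn t (lt_trans hδ0 ht.1)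
  have hcoef : 2^(p-1) * l^(p-β) * l⁻¹ = 2^(p-1) * l^(p-1-β) := by
    rw [mul_assoc]
    congr 1
    rw [← Real.rpow_neg_one l, ← Real.rpow_add hl0, show p - β + -1 = p-1-β by ring]
  have hA1 : 2^(p-1) * l^(p-β) * (∫ t in Ioc δ 1, |u (l*t)| ^ p * (l*t) ^ (β-p)) ≤
      2^(p-1) * l^(p-β) * (l⁻¹ * ((∫ t in Ioc δ 1, |u t| ^ p * t ^ (β - p))
        + ∫ t in Ioi (0:ℝ), |u t| ^ p * t ^ β)) :=
    mul_le_mul_of_nonneg_left hg1le (mul_nonneg h2p.le (Real.rpow_nonneg hl0.le _))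
  have hA2 : 2^(p-1) * c₁^(p-1) * (∫ t in Ioc δ 1, (Φ (l*t) - Φ t) * t⁻¹) ≤
      2^(p-1) * c₁^(p-1) * (Real.log l * ∫ s in Ioi (0:ℝ), |u' s| ^ p * s ^ β) :=
    mul_le_mul_of_nonneg_left hg2le (mul_nonneg h2p.le hc₁p)
  have hA3 : 2^(p-1) * l^(p-β) * (l⁻¹ * ((∫ t in Ioc δ 1, |u t| ^ p * t ^ (β - p))
        + ∫ t in Ioi (0:ℝ), |u t| ^ p * t ^ β)) =
      (2^(p-1) * l^(p-1-β)) * ((∫ t in Ioc δ 1, |u t| ^ p * t ^ (β - p))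
        + ∫ t in Ioi (0:ℝ), |u t| ^ p * t ^ β) := by
    rw [← hcoef]; ring
  have hA4 : (2^(p-1) * l^(p-1-β)) * ((∫ t in Ioc δ 1, |u t| ^ p * t ^ (β - p))
        + ∫ t in Ioi (0:ℝ), |u t| ^ p * t ^ β) ≤
      (1/2) * ((∫ t in Ioc δ 1, |u t| ^ p * t ^ (β - p))
        + ∫ t in Ioi (0:ℝ), |u t| ^ p * t ^ β) :=
    mul_le_mul_of_nonneg_right hθ (by linarith)
  linarith

/-- for `β > p-1`, every `u ∈ W^{1,p}(ℝ₊,t^β)` satisfies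
`∫_0^∞ |u|^p t^{β-p} dt < ∞`, i.e. `Y^{1,p}_{t^β} = W^{1,p}(ℝ₊,t^β)`. -/
theorem stmt13 (p β : ℝ) (hp : 1 < p) (hβ : p - 1 < β)
    (u u' : ℝ → ℝ) (hu : MemW p β u u') :
    IntegrableOn (fun t => |u t| ^ p * t ^ (β - p)) (Ioi (0:ℝ)) := by
  obtain ⟨hcont, hu'i, hftc, hIu, hIu'⟩ := hu
  obtain ⟨C, hC0, hC⟩ := core_bound p β hp hβ u u' hcont hu'i hftc hIu hIu'
  have hp0 : 0 < p := lt_trans one_pos hp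
  have hfnn : ∀ t : ℝ, 0 < t → 0 ≤ |u t| ^ p * t ^ (β - p) := fun t ht =>
    mul_nonneg (Real.rpow_nonneg (abs_nonneg _) _) (Real.rpow_nonneg ht.le _)
  have hfc : ContinuousOn (fun t : ℝ => |u t| ^ p * t ^ (β - p)) (Ioi 0) :=
    (hcont.abs.rpow_const fun x _ => Or.inr hp0.le).mul
      (continuousOn_id.rpow_const fun x hx => Or.inl (ne_of_gt hx))
  have hIf : ∀ a b : ℝ, 0 < a → IntegrableOn (fun t => |u t| ^ p * t ^ (β - p)) (Ioc a b) :=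
    fun a b ha => ((hfc.mono fun x hx => lt_of_lt_of_le ha hx.1).integrableOn_Icc).mono_set
      Ioc_subset_Icc_self
  -- integrability on (1, ∞)
  have hI1 : IntegrableOn (fun t => |u t| ^ p * t ^ (β - p)) (Ioi 1) := by
    refine Integrable.mono' (hIu.mono_set fun x (hx : x ∈ Ioi (1:ℝ)) => mem_Ioi.2 (lt_trans one_pos hx))
      ((hfc.mono fun x (hx : x ∈ Ioi (1:ℝ)) => mem_Ioi.2 (lt_trans one_pos hx)).aestronglyMeasurable measurableSet_Ioi) ?_
    filter_upwards [ae_restrict_mem measurableSet_Ioi] with t ht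
    rw [Real.norm_eq_abs, abs_of_nonneg (hfnn t (lt_trans one_pos ht))]
    exact mul_le_mul_of_nonneg_left
      (Real.rpow_le_rpow_of_exponent_le (le_of_lt ht) (by linarith))
      (Real.rpow_nonneg (abs_nonneg _) _)
  -- integrability on (0, 1]
  have hI01 : IntegrableOn (fun t => |u t| ^ p * t ^ (β - p)) (Ioc 0 1) := by
    have hcov : AECover (volume.restrict (Ioc (0:ℝ) 1)) atTop
        (fun n : ℕ => Ioc (1/((n:ℝ)+1)) 1) := by
      constructor
      · filter_upwards [ae_restrict_mem measurableSet_Ioc] with x hx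
        have hx0 : 0 < x := hx.1
        have htend : Tendsto (fun n : ℕ => 1/((n:ℝ)+1)) atTop (𝓝 0) :=
          tendsto_one_div_add_atTop_nhds_zero_nat
        filter_upwards [htend.eventually (gt_mem_nhds hx0)] with n hn
        exact ⟨hn, hx.2⟩
      · intro n; exact measurableSet_Ioc
    have hpos : ∀ n : ℕ, (0:ℝ) < 1/((n:ℝ)+1) := fun n => by positivity
    have hle1 : ∀ n : ℕ, 1/((n:ℝ)+1) ≤ 1 := fun n => by
      rw [div_le_one (by positivity)]
      simpa using (n.cast_nonneg : (0:ℝ) ≤ n)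
    have hsub : ∀ n : ℕ, Ioc (1/((n:ℝ)+1)) 1 ∩ Ioc 0 1 = Ioc (1/((n:ℝ)+1)) 1 := fun n =>
      inter_eq_self_of_subset_left fun x hx => ⟨lt_trans (hpos n) hx.1, hx.2⟩
    refine hcov.integrable_of_integral_norm_bounded C (fun n => ?_) (Eventually.of_forall fun n => ?_)
    · rw [IntegrableOn, Measure.restrict_restrict measurableSet_Ioc, hsub n]
      exact hIf _ 1 (hpos n)
    · rw [Measure.restrict_restrict measurableSet_Ioc, hsub n]
      have he : ∫ x in Ioc (1/((n:ℝ)+1)) 1, ‖|u x| ^ p * x ^ (β - p)‖ =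
          ∫ x in Ioc (1/((n:ℝ)+1)) 1, |u x| ^ p * x ^ (β - p) := by
        refine setIntegral_congr_fun measurableSet_Ioc fun x hx => ?_
        rw [Real.norm_eq_abs, abs_of_nonneg (hfnn x (lt_trans (hpos n) hx.1))]
      rw [he]
      exact hC _ (hpos n) (hle1 n)
  rw [show Ioi (0:ℝ) = Ioc 0 1 ∪ Ioi 1 from (Ioc_union_Ioi_eq_Ioi zero_le_one).symm]
  exact hI01.union hI1
end

section
/- Let 1 < p < ∞. The function u defined by u(t) = ln(−ln t) for t ∈ (0, 1/e) and u(t) = 0 for t ≥ 1/e belongs to W^{1,p}(ℝ₊,t^{p−1}), satisfies u(t) → +∞ as t → 0⁺, and satisfies ∫_0^∞ |u(t)|^p t^{−1} dt = ∞. Consequently Y^{1,p}_{t^{p−1}} is a proper subset of W^{1,p}(ℝ₊,t^{p−1}), and the trace operator u ↦ lim_{t→0⁺} u(t) cannot be defined on all of W^{1,p}(ℝ₊,t^{p−1}). -/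
open MeasureTheory Set Filter Topology

/-- The function `u(t) = ln(-ln t)` for `t ∈ (0, 1/e)`, and `u(t) = 0` for `t ≥ 1/e`. -/
noncomputable def u16 : ℝ → ℝ := fun t => if t < Real.exp (-1) then Real.log (-Real.log t) else 0

/-- The (weak) derivative of `u16` on `(0, ∞)`. -/
noncomputable def u16' : ℝ → ℝ :=
  fun t => if 0 < t ∧ t < Real.exp (-1) then 1 / (t * Real.log t) else 0

namespace Stmt16Aux

open Real

noncomputable def c : ℝ := Real.exp (-1)

lemma hc0 : (0:ℝ) < c := Real.exp_pos _

lemma hc1 : c < 1 := Real.exp_lt_one_iff.2 (by norm_num)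

lemma neg_log_gt {t : ℝ} (h0 : 0 < t) (h1 : t < c) : 1 < -Real.log t := by
  have := Real.log_lt_log h0 h1
  rw [show c = Real.exp (-1) from rfl, Real.log_exp] at this
  linarith

lemma u16_eq_of_lt {t : ℝ} (h : t < c) : u16 t = Real.log (-Real.log t) := if_pos h

lemma u16_eq_zero {t : ℝ} (h : c ≤ t) : u16 t = 0 := if_neg (not_lt.2 h)

lemma u16'_eq_of_mem {t : ℝ} (h0 : 0 < t) (h1 : t < c) : u16' t = 1 / (t * Real.log t) :=
  if_pos ⟨h0, h1⟩

lemma u16'_eq_zero {t : ℝ} (h : c ≤ t) : u16' t = 0 := by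
  apply if_neg; rintro ⟨_, h2⟩; exact absurd h (not_le.2 h2)

lemma u16_pos {t : ℝ} (h0 : 0 < t) (h1 : t < c) : 0 < u16 t := by
  rw [u16_eq_of_lt h1]
  exact Real.log_pos (neg_log_gt h0 h1)

lemma measurable_u16 : Measurable u16 := by
  unfold u16
  apply Measurable.ite
  · exact measurableSet_Iio
  · exact Real.measurable_log.comp Real.measurable_log.neg
  · exact measurable_const

lemma measurable_u16' : Measurable u16' := by
  unfold u16'
  apply Measurable.ite
  · have : {t : ℝ | 0 < t ∧ t < Real.exp (-1)} = Set.Ioo 0 (Real.exp (-1)) := rfl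
    rw [this]; exact measurableSet_Ioo
  · exact (measurable_const.div (measurable_id.mul Real.measurable_log))
  · exact measurable_const

lemma hasDerivAt_u16 {t : ℝ} (h0 : 0 < t) (h1 : t < c) :
    HasDerivAt u16 (1 / (t * Real.log t)) t := by
  have hlog : -Real.log t ≠ 0 := by have := neg_log_gt h0 h1; linarith
  have hinner : HasDerivAt (fun s : ℝ => -Real.log s) (-t⁻¹) t :=
    (Real.hasDerivAt_log h0.ne').neg
  have houter : HasDerivAt Real.log (-Real.log t)⁻¹ (-Real.log t) :=
    Real.hasDerivAt_log hlog
  have h : HasDerivAt (fun s : ℝ => Real.log (-Real.log s)) ((-Real.log t)⁻¹ * -t⁻¹) t :=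
    by have := houter.comp t hinner; exact this
  have heq : (-Real.log t)⁻¹ * -t⁻¹ = 1 / (t * Real.log t) := by
    have hl : Real.log t ≠ 0 := by have := neg_log_gt h0 h1; intro h; rw [h] at this; norm_num at this
    field_simp
  rw [heq] at h
  apply h.congr_of_eventuallyEq
  filter_upwards [IsOpen.mem_nhds isOpen_Iio h1] with s hs
  exact u16_eq_of_lt hs

lemma continuousOn_u16 : ContinuousOn u16 (Set.Ioi 0) := by
  intro x hx
  rcases lt_or_ge x 1 with hx1 | hx1
  · -- on (0,1), u16 agrees with max (log (-log t)) 0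
    have hx0 : (0:ℝ) < x := hx
    have hcont : ContinuousAt (fun t : ℝ => max (Real.log (-Real.log t)) 0) x := by
      have hlx : Real.log x ≠ 0 := ne_of_lt (Real.log_neg hx0 hx1)
      have h1 : ContinuousAt (fun t : ℝ => -Real.log t) x :=
        (Real.continuousAt_log hx0.ne').neg
      have h2 : ContinuousAt Real.log (-Real.log x) :=
        Real.continuousAt_log (by simpa using hlx)
      have h3 : ContinuousAt (fun t : ℝ => Real.log (-Real.log t)) x := ContinuousAt.comp (g := Real.log) h2 h1
      exact h3.max continuousAt_const
    have heq : ∀ t ∈ Set.Ioo (0:ℝ) 1, u16 t = max (Real.log (-Real.log t)) 0 := by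
      intro t ht
      rcases lt_or_ge t c with h | h
      · rw [u16_eq_of_lt h, max_eq_left (Real.log_pos (neg_log_gt ht.1 h)).le]
      · rw [u16_eq_zero h, eq_comm, max_eq_right]
        apply Real.log_nonpos
        · have := Real.log_neg ht.1 ht.2; linarith
        · have h2 : Real.log c ≤ Real.log t := Real.log_le_log hc0 h
          rw [show c = Real.exp (-1) from rfl, Real.log_exp] at h2
          linarith
    have : u16 =ᶠ[nhds x] fun t => max (Real.log (-Real.log t)) 0 := by
      filter_upwards [IsOpen.mem_nhds isOpen_Ioo (⟨hx0, hx1⟩ : x ∈ Set.Ioo (0:ℝ) 1)] with t ht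
      exact heq t ht
    exact (hcont.congr this.symm).continuousWithinAt
  · have : u16 =ᶠ[nhds x] fun _ => 0 := by
      filter_upwards [IsOpen.mem_nhds isOpen_Ioi (show c < x from lt_of_lt_of_le hc1 hx1)] with t ht
      exact u16_eq_zero (le_of_lt ht)
    exact (continuousAt_const.congr this.symm).continuousWithinAt

lemma abs_u16' {t : ℝ} (h0 : 0 < t) (h1 : t < c) :
    |u16' t| = (t * (-Real.log t))⁻¹ := by
  rw [u16'_eq_of_mem h0 h1]
  have hl : 1 < -Real.log t := neg_log_gt h0 h1
  rw [abs_div, abs_one, abs_mul, abs_of_pos h0, abs_of_neg (by linarith : Real.log t < 0)]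
  rw [one_div]

lemma integrableOn_u16' {a b : ℝ} (ha : 0 < a) (hab : a < b) :
    MeasureTheory.IntegrableOn u16' (Set.Ioc a b) := by
  apply MeasureTheory.Measure.integrableOn_of_bounded (M := a⁻¹)
  · exact measure_Ioc_lt_top.ne
  · exact measurable_u16'.aestronglyMeasurable
  · filter_upwards [MeasureTheory.ae_restrict_mem measurableSet_Ioc] with t ht
    rcases lt_or_ge t c with h | h
    · have h0 : 0 < t := lt_trans ha ht.1
      rw [Real.norm_eq_abs, abs_u16' h0 h]
      have hl : 1 < -Real.log t := neg_log_gt h0 h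
      have : a ≤ t * -Real.log t := by nlinarith [ht.1]
      exact inv_anti₀ ha this
    · rw [u16'_eq_zero h]
      simp [inv_nonneg.2 ha.le]

lemma key_bound {p : ℝ} (hp : 1 < p) {t : ℝ} (h0 : 0 < t) (htc : t ≤ c) :
    |u16 t| ^ p * t ^ (p-1) ≤ ((((p-1)/(2*p)) ^ p)⁻¹) * t ^ ((p-1)/2) := by
  set ε : ℝ := (p-1)/(2*p) with hεdef
  have hε0 : 0 < ε := div_pos (by linarith) (by linarith)
  have habs : |u16 t| ≤ t ^ (-ε) / ε := by
    rcases lt_or_ge t c with h | h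
    · rw [u16_eq_of_lt h, abs_of_pos (Real.log_pos (neg_log_gt h0 h))]
      calc Real.log (-Real.log t) ≤ -Real.log t - 1 :=
            Real.log_le_sub_one_of_pos (by linarith [neg_log_gt h0 h])
        _ ≤ -Real.log t := by linarith
        _ = Real.log t⁻¹ := (Real.log_inv t).symm
        _ ≤ (t⁻¹) ^ ε / ε := Real.log_le_rpow_div (inv_nonneg.2 h0.le) hε0
        _ = t ^ (-ε) / ε := by rw [Real.inv_rpow h0.le, ← Real.rpow_neg h0.le]
    · rw [u16_eq_zero h, abs_zero]
      positivity
  have hpow : |u16 t| ^ p ≤ (t ^ (-ε) / ε) ^ p :=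
    Real.rpow_le_rpow (abs_nonneg _) habs (by linarith)
  calc |u16 t| ^ p * t ^ (p-1) ≤ (t ^ (-ε) / ε) ^ p * t ^ (p-1) :=
        mul_le_mul_of_nonneg_right hpow (Real.rpow_nonneg h0.le _)
    _ = (ε ^ p)⁻¹ * (t ^ (-ε * p) * t ^ (p-1)) := by
        rw [Real.div_rpow (Real.rpow_nonneg h0.le _) hε0.le, ← Real.rpow_mul h0.le]
        ring
    _ = (ε ^ p)⁻¹ * t ^ ((p-1)/2) := by
        have hp0 : p ≠ 0 := by linarith
        have hexp : -ε * p + (p - 1) = (p - 1) / 2 := by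
          rw [hεdef]; field_simp; ring
        rw [← Real.rpow_add h0, hexp]

lemma integrable_pow_u16 {p : ℝ} (hp : 1 < p) :
    MeasureTheory.IntegrableOn (fun t => |u16 t| ^ p * t ^ (p-1)) (Set.Ioi (0:ℝ)) := by
  have hm : Measurable (fun t : ℝ => |u16 t| ^ p * t ^ (p-1)) := by
    have := measurable_u16; fun_prop
  rw [← Set.Ioc_union_Ioi_eq_Ioi hc0.le]
  apply MeasureTheory.IntegrableOn.union
  · set ε : ℝ := (p-1)/(2*p) with hεdef
    have hg : MeasureTheory.IntegrableOn (fun t : ℝ => (ε ^ p)⁻¹ * t ^ ((p-1)/2))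
        (Set.Ioc 0 c) := by
      apply MeasureTheory.Integrable.const_mul
      exact (intervalIntegral.intervalIntegrable_rpow' (a := 0) (b := c) (by linarith)).1
    apply hg.mono' hm.aestronglyMeasurable.restrict
    filter_upwards [MeasureTheory.ae_restrict_mem measurableSet_Ioc] with t ht
    have hb := key_bound hp ht.1 ht.2
    rwa [Real.norm_eq_abs, abs_of_nonneg (mul_nonneg (Real.rpow_nonneg (abs_nonneg _) _)
      (Real.rpow_nonneg ht.1.le _))]
  · have heq : Set.EqOn (fun t : ℝ => |u16 t| ^ p * t ^ (p-1)) 0 (Set.Ioi c) := by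
      intro t ht
      simp [u16_eq_zero (le_of_lt ht), Real.zero_rpow (by linarith : p ≠ 0)]
    rw [MeasureTheory.integrableOn_congr_fun heq measurableSet_Ioi]
    exact MeasureTheory.integrableOn_zero

lemma integrable_pow_u16' {p : ℝ} (hp : 1 < p) :
    MeasureTheory.IntegrableOn (fun t => |u16' t| ^ p * t ^ (p-1)) (Set.Ioi (0:ℝ)) := by
  have hm : Measurable (fun t : ℝ => |u16' t| ^ p * t ^ (p-1)) := by
    have := measurable_u16'; fun_prop
  rw [← Set.Ioc_union_Ioi_eq_Ioi hc0.le]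
  apply MeasureTheory.IntegrableOn.union
  · set G : ℝ → ℝ := fun t => (p-1)⁻¹ * (-Real.log t) ^ (1-p) with hGdef
    have hcont : ContinuousOn G (Set.Icc 0 c) := by
      intro x hx
      rcases eq_or_lt_of_le hx.1 with h0 | h0
      · have hIci : ContinuousWithinAt G (Set.Ici 0) 0 := by
          rw [← continuousWithinAt_Ioi_iff_Ici]
          have hG0 : G 0 = 0 := by
            simp [hGdef, Real.log_zero, Real.zero_rpow (by linarith : 1 - p ≠ 0)]
          rw [ContinuousWithinAt, hG0]
          have h1 : Filter.Tendsto (fun t : ℝ => -Real.log t) (nhdsWithin 0 (Set.Ioi 0))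
              Filter.atTop :=
            Filter.tendsto_neg_atBot_atTop.comp Real.tendsto_log_nhdsGT_zero
          have h2 : Filter.Tendsto (fun y : ℝ => y ^ (1-p)) Filter.atTop (nhds 0) := by
            have := tendsto_rpow_neg_atTop (y := p-1) (by linarith)
            simpa [show -(p-1) = 1-p by ring] using this
          have h3 := (h2.comp h1).const_mul ((p-1)⁻¹)
          simpa [hGdef, Function.comp] using h3
        rw [← h0] at hx ⊢
        exact hIci.mono Set.Icc_subset_Ici_self
      · have hlog : Real.log x < 0 := Real.log_neg h0 (lt_of_le_of_lt hx.2 hc1)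
        have h1 : ContinuousAt (fun t : ℝ => -Real.log t) x := (Real.continuousAt_log h0.ne').neg
        have h2 : ContinuousAt (fun y : ℝ => y ^ (1-p)) (-Real.log x) :=
          Real.continuousAt_rpow_const _ _ (Or.inl (by linarith))
        have h3 : ContinuousAt (fun t : ℝ => (-Real.log t) ^ (1-p)) x :=
          ContinuousAt.comp (g := fun y : ℝ => y ^ (1-p)) h2 h1
        have h4 : ContinuousAt G x := continuousAt_const.mul h3
        exact h4.continuousWithinAt
    have hderiv : ∀ x ∈ Set.Ioo (0:ℝ) c, HasDerivAt G (|u16' x| ^ p * x ^ (p-1)) x := by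
      intro x hx
      have h0 := hx.1
      have hxc := hx.2
      have hl : 1 < -Real.log x := neg_log_gt h0 hxc
      have hinner : HasDerivAt (fun t : ℝ => -Real.log t) (-x⁻¹) x :=
        (Real.hasDerivAt_log h0.ne').neg
      have houter : HasDerivAt (fun y : ℝ => y ^ (1-p))
          ((1-p) * (-Real.log x) ^ (1-p-1)) (-Real.log x) :=
        Real.hasDerivAt_rpow_const (Or.inl (by linarith))
      have h : HasDerivAt G ((p-1)⁻¹ * ((1-p) * (-Real.log x) ^ (1-p-1) * -x⁻¹)) x := by
        have := (HasDerivAt.comp x houter hinner).const_mul ((p-1)⁻¹); exact this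
      convert h using 1
      rw [abs_u16' h0 hxc, Real.inv_rpow (mul_nonneg h0.le (by linarith)),
        Real.mul_rpow h0.le (by linarith), show (1:ℝ)-p-1 = -p by ring,
        Real.rpow_neg (by linarith : (0:ℝ) ≤ -Real.log x),
        Real.rpow_sub h0, Real.rpow_one]
      have hx0 : x ^ p ≠ 0 := (Real.rpow_pos_of_pos h0 p).ne'
      have hl0 : (-Real.log x) ^ p ≠ 0 := (Real.rpow_pos_of_pos (by linarith) p).ne'
      have hp1 : p - 1 ≠ 0 := by linarith
      have hxne : x ≠ 0 := h0.ne'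
      field_simp
      ring
    have hnonneg : ∀ x ∈ Set.Ioo (0:ℝ) c, 0 ≤ |u16' x| ^ p * x ^ (p-1) := fun x hx =>
      mul_nonneg (Real.rpow_nonneg (abs_nonneg _) _) (Real.rpow_nonneg hx.1.le _)
    exact intervalIntegral.integrableOn_deriv_of_nonneg hcont hderiv hnonneg
  · have heq : Set.EqOn (fun t : ℝ => |u16' t| ^ p * t ^ (p-1)) 0 (Set.Ioi c) := by
      intro t ht
      simp [u16'_eq_zero (le_of_lt ht), Real.zero_rpow (by linarith : p ≠ 0)]
    rw [MeasureTheory.integrableOn_congr_fun heq measurableSet_Ioi]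
    exact MeasureTheory.integrableOn_zero

lemma ftc {p : ℝ} {a b : ℝ} (ha : 0 < a) (hab : a < b) :
    u16 b - u16 a = ∫ t in a..b, u16' t := by
  have hcont : ContinuousOn u16 (Set.Icc a b) :=
    continuousOn_u16.mono (fun x hx => lt_of_lt_of_le ha hx.1)
  have hderiv : ∀ x ∈ Set.Ioo a b, HasDerivWithinAt u16 (u16' x) (Set.Ioi x) x := by
    intro x hx
    rcases lt_or_ge x c with h | h
    · rw [u16'_eq_of_mem (ha.trans hx.1) h]
      exact (hasDerivAt_u16 (ha.trans hx.1) h).hasDerivWithinAt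
    · rw [u16'_eq_zero h]
      apply (hasDerivWithinAt_const x (Set.Ioi x) (0:ℝ)).congr
      · intro y hy
        exact u16_eq_zero (h.trans (le_of_lt hy))
      · exact u16_eq_zero h
  have hint : IntervalIntegrable u16' MeasureTheory.volume a b :=
    (intervalIntegrable_iff_integrableOn_Ioc_of_le hab.le).2 (integrableOn_u16' ha hab)
  exact (intervalIntegral.integral_eq_sub_of_hasDeriv_right_of_le hab.le hcont hderiv hint).symm

lemma tendsto_u16 : Filter.Tendsto u16 (nhdsWithin 0 (Set.Ioi 0)) Filter.atTop := by
  have h1 : Filter.Tendsto (fun t : ℝ => -Real.log t) (nhdsWithin 0 (Set.Ioi 0)) Filter.atTop :=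
    Filter.tendsto_neg_atBot_atTop.comp Real.tendsto_log_nhdsGT_zero
  have h2 : Filter.Tendsto (fun t : ℝ => Real.log (-Real.log t)) (nhdsWithin 0 (Set.Ioi 0))
      Filter.atTop := Real.tendsto_log_atTop.comp h1
  apply h2.congr'
  filter_upwards [Ioo_mem_nhdsGT hc0] with t ht
  exact (u16_eq_of_lt ht.2).symm

lemma not_integrable_u16 {p : ℝ} (hp : 1 < p) :
    ¬ MeasureTheory.IntegrableOn (fun t => |u16 t| ^ p * t ^ (-1 : ℝ)) (Set.Ioi (0:ℝ)) := by
  intro h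
  set d : ℝ := Real.exp (-Real.exp 1) with hd
  have hd0 : 0 < d := Real.exp_pos _
  have he1 : (1:ℝ) < Real.exp 1 := by
    have := Real.add_one_le_exp (1:ℝ); linarith
  have hdc : d < c := Real.exp_lt_exp.2 (by linarith)
  have hsub : MeasureTheory.IntegrableOn (fun t => |u16 t| ^ p * t ^ (-1 : ℝ))
      (Set.Ioo 0 d) := h.mono (fun x hx => hx.1) le_rfl
  have hoi : MeasureTheory.IntegrableOn (fun t : ℝ => t ^ (-1 : ℝ)) (Set.Ioo 0 d) := by
    have hmg : Measurable (fun t : ℝ => t ^ (-1 : ℝ)) := by fun_prop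
    apply hsub.mono' hmg.aestronglyMeasurable.restrict
    filter_upwards [MeasureTheory.ae_restrict_mem measurableSet_Ioo] with t ht
    have h0 := ht.1
    have htc : t < c := ht.2.trans hdc
    have h1le : 1 ≤ |u16 t| := by
      rw [u16_eq_of_lt htc, abs_of_pos (Real.log_pos (neg_log_gt h0 htc))]
      have hexp : Real.exp 1 ≤ -Real.log t := by
        have := Real.log_lt_log h0 ht.2
        rw [hd, Real.log_exp] at this
        linarith
      calc (1:ℝ) = Real.log (Real.exp 1) := (Real.log_exp 1).symm
        _ ≤ Real.log (-Real.log t) := Real.log_le_log (Real.exp_pos 1) hexp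
    rw [Real.norm_eq_abs, abs_of_nonneg (Real.rpow_nonneg h0.le _)]
    have h1p : 1 ≤ |u16 t| ^ p := Real.one_le_rpow h1le (by linarith)
    have htpos : 0 < t ^ (-1 : ℝ) := Real.rpow_pos_of_pos h0 _
    exact le_mul_of_one_le_left htpos.le h1p
  rw [intervalIntegral.integrableOn_Ioo_rpow_iff hd0] at hoi
  exact lt_irrefl _ hoi

end Stmt16Aux


/-- `u16 ∈ W^{1,p}(ℝ₊,t^{p-1})`, `u16(t) → +∞` as `t → 0⁺`, and
`∫_0^∞ |u16|^p t^{-1} dt = ∞`; hence `Y^{1,p}_{t^{p-1}} ⊊ W^{1,p}(ℝ₊,t^{p-1})` and the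
trace at `0` is not defined on all of `W^{1,p}(ℝ₊,t^{p-1})`. -/

theorem stmt16 (p : ℝ) (hp : 1 < p) :
    MemW p (p - 1) u16 u16' ∧
    Tendsto u16 (𝓝[>] (0:ℝ)) atTop ∧
    ¬ IntegrableOn (fun t => |u16 t| ^ p * t ^ (-1 : ℝ)) (Ioi (0:ℝ)) := by
  exact ⟨⟨Stmt16Aux.continuousOn_u16, fun a b ha hab => Stmt16Aux.integrableOn_u16' ha hab,
    fun a b ha hab => Stmt16Aux.ftc (p := p) ha hab, Stmt16Aux.integrable_pow_u16 hp,
    Stmt16Aux.integrable_pow_u16' hp⟩, Stmt16Aux.tendsto_u16, Stmt16Aux.not_integrable_u16 hp⟩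
end

section
/- Let 1 < p < ∞. Then every u ∈ W^{1,p}(ℝ₊,t^{p−1}) satisfies lim_{t→∞} u(t) = 0; in particular, if there merely exists a sequence T_n → ∞ with u(T_n) → 0, then already u(t) → 0 as t → ∞ (no oscillation at infinity is possible). -/
open MeasureTheory Set Filter Topology

/-- Tail integrals of an integrable function on `(0,∞)` tend to zero. -/
lemma tail_tendsto_aux {f : ℝ → ℝ} (hf : IntegrableOn f (Ioi 0)) :
    Tendsto (fun a : ℝ => ∫ t in Ioi a, f t) atTop (𝓝 0) := by
  have h := MeasureTheory.tendsto_setIntegral_of_antitone (μ := volume) (f := f)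
    (s := fun a : ℝ => Ioi a) (fun a => measurableSet_Ioi)
    (fun a b hab => Ioi_subset_Ioi hab) ⟨0, hf⟩
  have hempty : (⋂ a : ℝ, Ioi a) = (∅ : Set ℝ) := by
    ext x
    simp only [mem_iInter, mem_Ioi, mem_empty_iff_false, iff_false, not_forall, not_lt]
    exact ⟨x, le_refl x⟩
  rwa [hempty, MeasureTheory.Measure.restrict_empty, integral_zero_measure] at h

/-- every `u ∈ W^{1,p}(ℝ₊,t^{p-1})` satisfies `lim_{t→∞} u(t) = 0`;
in particular mere vanishing along a sequence `T_n → ∞` already yields the full limit. -/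
theorem stmt17 (p : ℝ) (hp : 1 < p)
    (u u' : ℝ → ℝ) (hu : MemW p (p - 1) u u') :
    Tendsto u atTop (𝓝 0) := by
  obtain ⟨hcont, hu'int, hftc, hgint, hfint⟩ := hu
  have hp0 : (0:ℝ) < p := zero_lt_one.trans hp
  set q : ℝ := p / (p - 1) with hqdef
  have hpq : p.HolderConjugate q := Real.HolderConjugate.conjExponent hp
  have hq0 : (0:ℝ) < q := hpq.symm.pos
  set F : ℝ → ℝ := fun a => ∫ t in Ioi a, |u' t| ^ p * t ^ (p - 1) with hFdef
  set G : ℝ → ℝ := fun a => ∫ t in Ioi a, |u t| ^ p * t ^ (p - 1) with hGdef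
  have hFtend : Tendsto F atTop (𝓝 0) := tail_tendsto_aux hfint
  have hGtend : Tendsto G atTop (𝓝 0) := tail_tendsto_aux hgint
  rw [Metric.tendsto_atTop]
  intro ε hε
  set ε' : ℝ := ε / 4 with hε'def
  have hε' : (0:ℝ) < ε' := by positivity
  -- choose λ (called L) with L^(-q)/q < ε'
  have hLlim : Tendsto (fun l : ℝ => l ^ (-q) / q) atTop (𝓝 0) := by
    have := (tendsto_rpow_neg_atTop hq0).div_const q
    simpa using this
  obtain ⟨L, hLε, hL1⟩ := ((hLlim.eventually_lt_const hε').and (eventually_ge_atTop 1)).exists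
  have hL0 : (0:ℝ) < L := zero_lt_one.trans_le hL1
  -- choose A
  have hev1 : ∀ᶠ a in atTop, (L ^ p / p) * F a < ε' := by
    have h1 : Tendsto (fun a => (L ^ p / p) * F a) atTop (𝓝 ((L ^ p / p) * 0)) :=
      hFtend.const_mul _
    rw [mul_zero] at h1
    exact h1.eventually_lt_const hε'
  have hev2 : ∀ᶠ a in atTop, G a < ε' ^ p :=
    hGtend.eventually_lt_const (Real.rpow_pos_of_pos hε' p)
  obtain ⟨A₀, hA₀⟩ := eventually_atTop.mp (hev1.and hev2)
  set A : ℝ := max A₀ 1 with hAdef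
  refine ⟨2 * A, fun t ht => ?_⟩
  set a : ℝ := t / 2 with hadef
  have haA : A ≤ a := by rw [hadef]; linarith
  have ha1 : (1:ℝ) ≤ a := le_trans (le_max_right A₀ 1) haA
  have ha0 : (0:ℝ) < a := zero_lt_one.trans_le ha1
  have h2a : 2 * a = t := by rw [hadef]; ring
  obtain ⟨hFa, hGa⟩ := hA₀ a (le_trans (le_max_left A₀ 1) haA)
  have hFa0 : 0 ≤ F a := by
    apply MeasureTheory.setIntegral_nonneg measurableSet_Ioi
    intro r hr
    have hr0 : (0:ℝ) < r := ha0.trans hr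
    exact mul_nonneg (Real.rpow_nonneg (abs_nonneg _) _) (Real.rpow_nonneg hr0.le _)
  have hIccsub : Icc a (2 * a) ⊆ Ioi 0 := fun r hr => lt_of_lt_of_le ha0 hr.1
  -- oscillation bound on [a, 2a]
  have hosc : ∀ x y : ℝ, a ≤ x → x < y → y ≤ 2 * a →
      |u y - u x| ≤ (L ^ p / p) * F a + L ^ (-q) / q := by
    intro x y hax hxy hy2a
    have hx0 : (0:ℝ) < x := lt_of_lt_of_le ha0 hax
    -- pointwise Young inequality
    have key : ∀ r ∈ Ioc x y,
        |u' r| ≤ (L ^ p / p) * (|u' r| ^ p * r ^ (p - 1)) + (L ^ (-q) / q) * r⁻¹ := by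
      intro r hr
      have hr0 : (0:ℝ) < r := hx0.trans hr.1
      set e : ℝ := (p - 1) / p with hedef
      have hre : (0:ℝ) ≤ r ^ e := Real.rpow_nonneg hr0.le _
      have ha' : 0 ≤ L * (|u' r| * r ^ e) :=
        mul_nonneg hL0.le (mul_nonneg (abs_nonneg _) hre)
      have hb' : 0 ≤ L⁻¹ * r ^ (-e) :=
        mul_nonneg (inv_nonneg.2 hL0.le) (Real.rpow_nonneg hr0.le _)
      have hY := Real.young_inequality_of_nonneg ha' hb' hpq
      have hlhs : L * (|u' r| * r ^ e) * (L⁻¹ * r ^ (-e)) = |u' r| := by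
        rw [Real.rpow_neg hr0.le]
        have h1 : r ^ e ≠ 0 := (Real.rpow_pos_of_pos hr0 e).ne'
        field_simp
      have hep : e * p = p - 1 := by
        rw [hedef]; field_simp
      have heq : e * q = 1 := by
        have hp1 : p - 1 ≠ 0 := by linarith
        rw [hedef, hqdef]
        field_simp
      have hrhs1 : (L * (|u' r| * r ^ e)) ^ p = L ^ p * (|u' r| ^ p * r ^ (p - 1)) := by
        rw [Real.mul_rpow hL0.le (mul_nonneg (abs_nonneg _) hre),
          Real.mul_rpow (abs_nonneg _) hre, ← Real.rpow_mul hr0.le, hep]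
      have hrhs2 : (L⁻¹ * r ^ (-e)) ^ q = L ^ (-q) * r⁻¹ := by
        rw [Real.mul_rpow (inv_nonneg.2 hL0.le) (Real.rpow_nonneg hr0.le _),
          Real.inv_rpow hL0.le, ← Real.rpow_neg hL0.le,
          ← Real.rpow_mul hr0.le, neg_mul, heq, Real.rpow_neg_one]
      calc |u' r| = L * (|u' r| * r ^ e) * (L⁻¹ * r ^ (-e)) := hlhs.symm
        _ ≤ (L * (|u' r| * r ^ e)) ^ p / p + (L⁻¹ * r ^ (-e)) ^ q / q := hY
        _ = (L ^ p / p) * (|u' r| ^ p * r ^ (p - 1)) + (L ^ (-q) / q) * r⁻¹ := by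
            rw [hrhs1, hrhs2]; ring
    -- integrability of the majorant on Ioc x y
    have hfxy : IntegrableOn (fun r => |u' r| ^ p * r ^ (p - 1)) (Ioc x y) := by
      apply hfint.mono_set
      intro r hr
      exact hx0.trans hr.1
    have hinv : IntegrableOn (fun r : ℝ => r⁻¹) (Ioc x y) := by
      have hc : ContinuousOn (fun r : ℝ => r⁻¹) (Icc x y) := by
        apply ContinuousOn.inv₀ continuousOn_id
        intro r hr
        exact (hx0.trans_le hr.1).ne'
      exact (hc.integrableOn_Icc).mono_set Ioc_subset_Icc_self
    have hmaj : IntegrableOn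
        (fun r => (L ^ p / p) * (|u' r| ^ p * r ^ (p - 1)) + (L ^ (-q) / q) * r⁻¹)
        (Ioc x y) := (hfxy.const_mul _).add (hinv.const_mul _)
    -- the integral bounds
    have hstep1 : ∫ r in Ioc x y, |u' r| ≤
        ∫ r in Ioc x y, ((L ^ p / p) * (|u' r| ^ p * r ^ (p - 1)) + (L ^ (-q) / q) * r⁻¹) :=
      MeasureTheory.setIntegral_mono_on (hu'int x y hx0 hxy).abs hmaj measurableSet_Ioc key
    have hsplit : ∫ r in Ioc x y, ((L ^ p / p) * (|u' r| ^ p * r ^ (p - 1)) + (L ^ (-q) / q) * r⁻¹)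
        = (L ^ p / p) * (∫ r in Ioc x y, |u' r| ^ p * r ^ (p - 1))
          + (L ^ (-q) / q) * (∫ r in Ioc x y, r⁻¹) := by
      rw [MeasureTheory.integral_add (hfxy.const_mul _) (hinv.const_mul _),
        MeasureTheory.integral_const_mul, MeasureTheory.integral_const_mul]
    have hbound1 : ∫ r in Ioc x y, |u' r| ^ p * r ^ (p - 1) ≤ F a := by
      apply MeasureTheory.setIntegral_mono_set (hfint.mono_set (Ioi_subset_Ioi ha0.le))
      · filter_upwards [MeasureTheory.ae_restrict_mem measurableSet_Ioi] with r hr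
        have hr0 : (0:ℝ) < r := ha0.trans hr
        exact mul_nonneg (Real.rpow_nonneg (abs_nonneg _) _) (Real.rpow_nonneg hr0.le _)
      · apply HasSubset.Subset.eventuallyLE
        intro r hr
        exact lt_of_le_of_lt hax hr.1
    have hbound2 : ∫ r in Ioc x y, (r : ℝ)⁻¹ ≤ 1 := by
      have h1 : ∫ r in Ioc x y, (r : ℝ)⁻¹ ≤ ∫ _ in Ioc x y, a⁻¹ := by
        apply MeasureTheory.setIntegral_mono_on hinv
          (MeasureTheory.integrableOn_const measure_Ioc_lt_top.ne) measurableSet_Ioc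
        intro r hr
        exact inv_anti₀ ha0 (le_trans hax hr.1.le)
      have h2 : ∫ _ in Ioc x y, (a : ℝ)⁻¹ = (y - x) * a⁻¹ := by
        rw [MeasureTheory.setIntegral_const, Real.volume_real_Ioc_of_le (by linarith), smul_eq_mul]
      have h3 : (y - x) * a⁻¹ ≤ 1 := by
        have hyx : y - x ≤ a := by linarith
        calc (y - x) * a⁻¹ ≤ a * a⁻¹ :=
              mul_le_mul_of_nonneg_right hyx (inv_nonneg.2 ha0.le)
          _ = 1 := mul_inv_cancel₀ ha0.ne'
      linarith
    have hFTC : u y - u x = ∫ r in x..y, u' r := hftc x y hx0 hxy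
    calc |u y - u x| = |∫ r in x..y, u' r| := by rw [hFTC]
      _ ≤ ∫ r in x..y, |u' r| := intervalIntegral.abs_integral_le_integral_abs hxy.le
      _ = ∫ r in Ioc x y, |u' r| := intervalIntegral.integral_of_le hxy.le
      _ ≤ (L ^ p / p) * (∫ r in Ioc x y, |u' r| ^ p * r ^ (p - 1))
            + (L ^ (-q) / q) * (∫ r in Ioc x y, r⁻¹) := by rw [← hsplit]; exact hstep1
      _ ≤ (L ^ p / p) * F a + (L ^ (-q) / q) * 1 := by
          apply add_le_add
          · exact mul_le_mul_of_nonneg_left hbound1 (by positivity)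
          · exact mul_le_mul_of_nonneg_left hbound2 (by positivity)
      _ = (L ^ p / p) * F a + L ^ (-q) / q := by rw [mul_one]
  -- minimum of |u| on [a, 2a]
  obtain ⟨s₀, hs₀mem, hs₀min⟩ := (isCompact_Icc (a := a) (b := 2 * a)).exists_isMinOn
    ⟨a, le_refl a, by linarith⟩ ((hcont.mono hIccsub).abs)
  have hs₀le : ∀ r ∈ Icc a (2 * a), |u s₀| ≤ |u r| := fun r hr => hs₀min hr
  -- bound |u s₀| ≤ ε'
  have hmin : |u s₀| ^ p ≤ G a := by
    have h1 : ∫ _ in Ioc a (2 * a), |u s₀| ^ p ≤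
        ∫ r in Ioc a (2 * a), |u r| ^ p * r ^ (p - 1) := by
      apply MeasureTheory.setIntegral_mono_on
        (MeasureTheory.integrableOn_const measure_Ioc_lt_top.ne)
        (hgint.mono_set (fun r hr => ha0.trans hr.1)) measurableSet_Ioc
      intro r hr
      have hr1 : (1:ℝ) ≤ r := le_trans ha1 hr.1.le
      have h2 : |u s₀| ^ p ≤ |u r| ^ p :=
        Real.rpow_le_rpow (abs_nonneg _) (hs₀le r (Ioc_subset_Icc_self hr)) hp0.le
      have h3 : (1:ℝ) ≤ r ^ (p - 1) := by
        calc (1:ℝ) = 1 ^ (p - 1) := (Real.one_rpow _).symm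
          _ ≤ r ^ (p - 1) := Real.rpow_le_rpow zero_le_one hr1 (by linarith)
      calc |u s₀| ^ p ≤ |u r| ^ p := h2
        _ ≤ |u r| ^ p * r ^ (p - 1) :=
            le_mul_of_one_le_right (Real.rpow_nonneg (abs_nonneg _) _) h3
    have h2 : ∫ _ in Ioc a (2 * a), |u s₀| ^ p = a * |u s₀| ^ p := by
      rw [MeasureTheory.setIntegral_const, Real.volume_real_Ioc_of_le (by linarith), smul_eq_mul]
      ring_nf
    have h3 : ∫ r in Ioc a (2 * a), |u r| ^ p * r ^ (p - 1) ≤ G a := by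
      apply MeasureTheory.setIntegral_mono_set (hgint.mono_set (Ioi_subset_Ioi ha0.le))
      · filter_upwards [MeasureTheory.ae_restrict_mem measurableSet_Ioi] with r hr
        have hr0 : (0:ℝ) < r := ha0.trans hr
        exact mul_nonneg (Real.rpow_nonneg (abs_nonneg _) _) (Real.rpow_nonneg hr0.le _)
      · exact HasSubset.Subset.eventuallyLE (fun r hr => hr.1)
    have h4 : |u s₀| ^ p ≤ a * |u s₀| ^ p :=
      le_mul_of_one_le_left (Real.rpow_nonneg (abs_nonneg _) _) ha1
    linarith
  have hus₀ : |u s₀| ≤ ε' := by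
    by_contra hcon
    push_neg at hcon
    have : ε' ^ p < |u s₀| ^ p := Real.rpow_lt_rpow hε'.le hcon hp0
    linarith
  -- oscillation between t and s₀
  have htmem : t ∈ Icc a (2 * a) := ⟨by rw [hadef]; linarith, h2a.ge⟩
  have hosc' : |u t - u s₀| ≤ (L ^ p / p) * F a + L ^ (-q) / q := by
    rcases lt_trichotomy s₀ t with h | h | h
    · exact hosc s₀ t hs₀mem.1 h htmem.2
    · rw [h]
      simp only [sub_self, abs_zero]
      positivity
    · rw [abs_sub_comm]
      exact hosc t s₀ htmem.1 h hs₀mem.2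
  -- conclusion
  rw [Real.dist_eq, sub_zero]
  have : |u t| ≤ |u s₀| + |u t - u s₀| := by
    calc |u t| = |u s₀ + (u t - u s₀)| := by ring_nf
      _ ≤ |u s₀| + |u t - u s₀| := abs_add_le _ _
  have hq' : L ^ (-q) / q < ε' := hLε
  calc |u t| ≤ |u s₀| + |u t - u s₀| := this
    _ ≤ ε' + ((L ^ p / p) * F a + L ^ (-q) / q) := add_le_add hus₀ hosc'
    _ < ε' + (ε' + ε') := by linarith
    _ < ε := by rw [hε'def]; linarith
end
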